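/- arXiv:2403.06667 — 10 statements merged into one kernel-verified Lean document; each statement's English description precedes it below -/
import Mathlib

section
/- If a string S of length n has periods p and q with p + q ≤ n, then gcd(p, q) is also a period of S. -/
/-- `p` is a period of the string `S : Fin n → α`. -/
def IsPeriod {α : Type*} {n : ℕ} (S : Fin n → α) (p : ℕ) : Prop :=
  0 < p ∧ p ≤ n ∧ ∀ i : ℕ, (h : i + p < n) → S ⟨i, by omega⟩ = S ⟨i + p, h⟩

/-- If `p > q` are periods with `p + q ≤ n`, then `p - q` is a period. -/
lemma isPeriod_sub {α : Type*} {n : ℕ} (S : Fin n → α) (p q : ℕ)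
    (hp : IsPeriod S p) (hq : IsPeriod S q) (hpq : p + q ≤ n) (hlt : q < p) :
    IsPeriod S (p - q) := by
  obtain ⟨hp0, hpn, hpS⟩ := hp
  obtain ⟨hq0, hqn, hqS⟩ := hq
  refine ⟨by omega, by omega, fun i h => ?_⟩
  by_cases hip : i + p < n
  · have h1 := hpS i hip
    have h2 : (i + (p - q)) + q < n := by omega
    have h3 := hqS (i + (p - q)) h2
    rw [h1]
    have : (⟨i + p, hip⟩ : Fin n) = ⟨i + (p - q) + q, h2⟩ := by
      apply Fin.ext; simp; omega
    rw [this, ← h3]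
  · -- i ≥ q since i + p ≥ n ≥ p + q
    have hiq : q ≤ i := by omega
    have h1 : (i - q) + q < n := by omega
    have h2 : (i - q) + p < n := by omega
    have e1 := hqS (i - q) h1
    have e2 := hpS (i - q) h2
    have : (⟨i - q + q, h1⟩ : Fin n) = ⟨i, by omega⟩ := by
      apply Fin.ext; simp; omega
    rw [this] at e1
    rw [← e1, e2]
    congr 1
    apply Fin.ext; simp; omega

lemma aux {α : Type*} {n : ℕ} : ∀ (k : ℕ) (S : Fin n → α) (p q : ℕ),
    p + q ≤ k → IsPeriod S p → IsPeriod S q → p + q ≤ n →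
    IsPeriod S (Nat.gcd p q) := by
  intro k
  induction k with
  | zero => intro S p q hk hp _ _; exact absurd hp.1 (by omega)
  | succ k ih =>
    intro S p q hk hp hq hpq
    have hp0 := hp.1
    have hq0 := hq.1
    rcases lt_trichotomy p q with h | h | h
    · have := ih S p (q - p) (by omega)
        hp (isPeriod_sub S q p hq hp (by omega) h) (by omega)
      rwa [Nat.gcd_sub_self_right (by omega)] at this
    · subst h
      rw [Nat.gcd_self]
      exact hp
    · have := ih S (p - q) q (by omega)
        (isPeriod_sub S p q hp hq hpq h) hq (by omega)
      rwa [Nat.gcd_sub_self_left (by omega)] at this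

/-- Fine–Wilf periodicity lemma: if `p` and `q` are periods of `S` and `p + q ≤ n`,
then `gcd p q` is also a period of `S`. -/
theorem periodicity_lemma {α : Type*} {n : ℕ} (S : Fin n → α) (p q : ℕ)
    (hp : IsPeriod S p) (hq : IsPeriod S q) (hpq : p + q ≤ n) :
    IsPeriod S (Nat.gcd p q) := by
  exact aux (p + q) S p q le_rfl hp hq hpq
end

section
/- For any string S and any integer a ≥ 0, at most two prefixes of S with lengths in the interval [2^a, 2^(a+1)) are primitively rooted squares. -/
/-- The `k`-th power of a string: concatenation of `k` copies of `V`. -/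
def listPow {α : Type*} (V : List α) (k : ℕ) : List α := (List.replicate k V).flatten

/-- A string is primitive if it is not a power `V^k` with `k > 1`. -/
def PrimitiveList {α : Type*} (U : List α) : Prop :=
  ∀ (V : List α) (k : ℕ), 1 < k → U ≠ listPow V k

namespace PRSq

/-- `f` has period `p` on `[0, ℓ)`. -/
def Per {α : Type*} (f : ℕ → Option α) (p ℓ : ℕ) : Prop :=
  ∀ i, i + p < ℓ → f i = f (i + p)

lemma per_mono {α : Type*} {f : ℕ → Option α} {p ℓ ℓ' : ℕ} (h : Per f p ℓ) (hle : ℓ' ≤ ℓ) :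
    Per f p ℓ' := fun i hi => h i (lt_of_lt_of_le hi hle)

/-- Fine–Wilf (weak form). -/
lemma fine_wilf {α : Type*} (f : ℕ → Option α) :
    ∀ n p q ℓ, p + q ≤ n → Per f p ℓ → Per f q ℓ → p + q ≤ ℓ → Per f (Nat.gcd p q) ℓ := by
  intro n
  induction n with
  | zero =>
    intro p q ℓ hn hp hq hpq
    have : p = 0 ∧ q = 0 := by omega
    simpa [this.1, this.2] using hp
  | succ n ih =>
    intro p q ℓ hn hp hq hpq
    rcases Nat.eq_zero_or_pos p with hp0 | hp0
    · simpa [hp0] using hq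
    rcases Nat.eq_zero_or_pos q with hq0 | hq0
    · simpa [hq0] using hp
    rcases lt_trichotomy p q with hlt | heq | hgt
    · -- reduce (p, q) to (p, q - p)
      have hsub : Per f (q - p) ℓ := by
        intro i hi
        by_cases hcase : i + q < ℓ
        · have h1 : f (i + (q - p)) = f (i + (q - p) + p) := hp _ (by omega)
          have h2 : f i = f (i + q) := hq i hcase
          have : i + (q - p) + p = i + q := by omega
          rw [h1, this, ← h2]
        · have hip : p ≤ i := by omega
          have h1 : f (i - p) = f (i - p + p) := hp _ (by omega)
          have h2 : f (i - p) = f (i - p + q) := hq _ (by omega)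
          have e1 : i - p + p = i := by omega
          have e2 : i - p + q = i + (q - p) := by omega
          rw [e1] at h1
          rw [e2] at h2
          rw [← h1, h2]
      have := ih p (q - p) ℓ (by omega) hp hsub (by omega)
      rwa [Nat.gcd_sub_self_right (le_of_lt hlt)] at this
    · subst heq
      rwa [Nat.gcd_self]
    · have hsub : Per f (p - q) ℓ := by
        intro i hi
        by_cases hcase : i + p < ℓ
        · have h1 : f (i + (p - q)) = f (i + (p - q) + q) := hq _ (by omega)
          have h2 : f i = f (i + p) := hp i hcase
          have : i + (p - q) + q = i + p := by omega
          rw [h1, this, ← h2]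
        · have h1 : f (i - q) = f (i - q + q) := hq _ (by omega)
          have h2 : f (i - q) = f (i - q + p) := hp _ (by omega)
          have e1 : i - q + q = i := by omega
          have e2 : i - q + p = i + (p - q) := by omega
          rw [e1] at h1
          rw [e2] at h2
          rw [← h1, h2]
      have := ih (p - q) q ℓ (by omega) hsub hq (by omega)
      rwa [Nat.gcd_sub_self_left (le_of_lt hgt)] at this

lemma prefix_getElem? {α : Type*} {x y : List α} (h : x <+: y) {n : ℕ} (hn : n < x.length) :
    y[n]? = x[n]? := by
  obtain ⟨t, rfl⟩ := h
  exact List.getElem?_append_left hn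

/-- If `u` has period `p` with `p ∣ u.length`, `0 < p < u.length`, then `u` is not primitive. -/
lemma not_primitive_of_period {α : Type*} (u : List α) (p : ℕ) (hp : 0 < p)
    (hlt : p < u.length) (hdvd : p ∣ u.length)
    (hper : ∀ i, i + p < u.length → u[i]? = u[i + p]?) : ¬ PrimitiveList u := by
  intro hprim
  set k := u.length / p with hk
  have hkp : k * p = u.length := Nat.div_mul_cancel hdvd
  have hk2 : 1 < k := by
    rcases Nat.lt_or_ge k 2 with h | h
    · interval_cases k <;> omega
    · exact h
  have key : ∀ m, m * p ≤ u.length → u.take (m * p) = listPow (u.take p) m := by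
    intro m
    induction m with
    | zero => simp [listPow]
    | succ m ihm =>
      intro hm
      have hm' : m * p ≤ u.length :=
        le_trans (Nat.mul_le_mul_right p (Nat.le_succ m)) hm
      have step : u.take ((m + 1) * p) = u.take p ++ (u.drop p).take (m * p) := by
        rw [← List.take_add]
        congr 1
        ring
      have agree : (u.drop p).take (m * p) = u.take (m * p) := by
        apply List.ext_getElem?
        intro i
        rcases Nat.lt_or_ge i (m * p) with hi | hi
        · rw [List.getElem?_take_of_lt hi, List.getElem?_take_of_lt hi, List.getElem?_drop]
          have hip : i + p < u.length := by
            have h1 : i + p < (m + 1) * p := by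
              have : (m + 1) * p = m * p + p := by ring
              omega
            omega
          rw [Nat.add_comm p i]
          exact (hper i hip).symm
        · rw [List.getElem?_eq_none (by simp; omega), List.getElem?_eq_none (by simp; omega)]
      rw [step, agree, ihm hm']
      show _ = (List.replicate (m + 1) (u.take p)).flatten
      rw [List.replicate_succ, List.flatten_cons]
      rfl
  have := key k (le_of_eq hkp)
  rw [hkp, List.take_length] at this
  exact hprim (u.take p) k hk2 this

/-- Main combinatorial lemma: no three primitively-rooted square prefixes with
root lengths `n1 < n2 < n3 < 2 * n1`. -/
lemma key_lemma {α : Type*} {S u v w : List α}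
    (hu : (u ++ u) <+: S) (hv : (v ++ v) <+: S) (hw : (w ++ w) <+: S)
    (hprim : PrimitiveList u)
    (h12 : u.length < v.length) (h23 : v.length < w.length)
    (h31 : w.length < 2 * u.length) : False := by
  set n1 := u.length with hn1
  set n2 := v.length with hn2
  set n3 := w.length with hn3
  set f : ℕ → Option α := fun i => S[i]? with hf
  -- basic prefix facts
  have hu1 : ∀ i < n1, f i = u[i]? := by
    intro i hi
    exact prefix_getElem? ((List.prefix_append u u).trans hu) hi
  have hu2 : ∀ i < n1, f (i + n1) = u[i]? := by
    intro i hi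
    have h1 : f (i + n1) = (u ++ u)[i + n1]? :=
      prefix_getElem? hu (by simp; omega)
    rw [h1, List.getElem?_append_right (by omega)]
    congr 1
    omega
  have hv1 : ∀ i < n2, f i = v[i]? := fun i hi =>
    prefix_getElem? ((List.prefix_append v v).trans hv) hi
  have hv2 : ∀ i < n2, f (i + n2) = v[i]? := by
    intro i hi
    have h1 : f (i + n2) = (v ++ v)[i + n2]? :=
      prefix_getElem? hv (by simp; omega)
    rw [h1, List.getElem?_append_right (by omega)]
    congr 1
    omega
  have hw1 : ∀ i < n3, f i = w[i]? := fun i hi =>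
    prefix_getElem? ((List.prefix_append w w).trans hw) hi
  have hw2 : ∀ i < n3, f (i + n3) = w[i]? := by
    intro i hi
    have h1 : f (i + n3) = (w ++ w)[i + n3]? :=
      prefix_getElem? hw (by simp; omega)
    rw [h1, List.getElem?_append_right (by omega)]
    congr 1
    omega
  set c := n3 - n2 with hc
  set d := n2 - n1 with hd
  have hc0 : 0 < c := by omega
  have hd0 : 0 < d := by omega
  have hcd : c + d < n1 := by omega
  -- v has period c : Per f c n2
  have Pc : Per f c n2 := by
    intro i hi
    have e1 : f (i + c) = v[i + c]? := hv1 _ hi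
    have e2 : f (i + c + n2) = v[i + c]? := hv2 _ hi
    have e3 : f (i + n3) = w[i]? := hw2 i (by omega)
    have e4 : f i = w[i]? := hw1 i (by omega)
    have e5 : i + c + n2 = i + n3 := by omega
    rw [e4, ← e3, ← e5, e2, ← e1]
  -- u has period d : Per f d n1
  have Pd : Per f d n1 := by
    intro i hi
    have e1 : f (i + d) = u[i + d]? := hu1 _ hi
    have e2 : f (i + d + n1) = u[i + d]? := hu2 _ hi
    have e3 : f (i + n2) = v[i]? := hv2 i (by omega)
    have e4 : f i = v[i]? := hv1 i (by omega)
    have e5 : i + d + n1 = i + n2 := by omega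
    rw [e4, ← e3, ← e5, e2, ← e1]
  -- Per f n1 n2
  have Pn1 : Per f n1 n2 := by
    intro i hi
    have hilt : i < n1 := by omega
    rw [hu1 i hilt, Nat.add_comm, ← hu2 i hilt, Nat.add_comm]
  -- final contradiction from a small period of u dividing n1
  have final : ∀ p, 0 < p → p ∣ n1 → p < n1 → Per f p n1 → False := by
    intro p hp hdvd hplt hper
    refine not_primitive_of_period u p hp hplt hdvd ?_ hprim
    intro i hi
    rw [← hu1 i (by omega), ← hu1 (i + p) hi]
    exact hper i hi
  rcases le_or_gt c d with hAcase | hBcase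
  · -- Case A: c ≤ d. FW on v with periods c and n1.
    have hfw := fine_wilf f (c + n1) c n1 n2 le_rfl (per_mono Pc le_rfl) Pn1 (by omega)
    set g := Nat.gcd c n1 with hg
    have hg0 : 0 < g := Nat.gcd_pos_of_pos_left _ hc0
    have hgdvd : g ∣ n1 := Nat.gcd_dvd_right _ _
    have hglt : g < n1 := lt_of_le_of_lt (Nat.le_of_dvd hc0 (Nat.gcd_dvd_left _ _)) (by omega)
    exact final g hg0 hgdvd hglt (per_mono hfw (by omega))
  · -- Case B: d < c.
    have Pc1 : Per f c n1 := per_mono Pc (by omega)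
    have hfw1 := fine_wilf f (c + d) c d n1 le_rfl Pc1 Pd (by omega)
    set g := Nat.gcd c d with hg
    have hg0 : 0 < g := Nat.gcd_pos_of_pos_left _ hc0
    have hgd : g ∣ d := Nat.gcd_dvd_right _ _
    have hgled : g ≤ d := Nat.le_of_dvd hd0 hgd
    -- extend period g from [0, n1) to [0, n2)
    have Pg2 : Per f g n2 := by
      intro i hi
      by_cases hcase : i + g < n1
      · exact hfw1 i hcase
      · have hic : c ≤ i := by omega
        have e1 : f (i - c) = f (i - c + c) := Pc _ (by omega)
        have e2 : f (i - c + g) = f (i - c + g + c) := Pc _ (by omega)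
        have e3 : f (i - c) = f (i - c + g) := hfw1 _ (by omega)
        have e4 : i - c + c = i := by omega
        have e5 : i - c + g + c = i + g := by omega
        rw [e4] at e1
        rw [e5] at e2
        rw [← e1, e3, e2]
    -- FW on v with periods g and n1
    have hfw2 := fine_wilf f (g + n1) g n1 n2 le_rfl Pg2 Pn1 (by omega)
    set g' := Nat.gcd g n1 with hg'
    have hg'0 : 0 < g' := Nat.gcd_pos_of_pos_left _ hg0
    have hg'dvd : g' ∣ n1 := Nat.gcd_dvd_right _ _
    have hg'lt : g' < n1 :=
      lt_of_le_of_lt (Nat.le_of_dvd hg0 (Nat.gcd_dvd_left _ _)) (by omega)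
    exact final g' hg'0 hg'dvd hg'lt (per_mono hfw2 (by omega))

end PRSq

/-- For any string `S` and integer `a`, at most two prefixes of `S` with lengths in
`[2^a, 2^(a+1))` are primitively rooted squares. -/
theorem at_most_two_primitive_square_prefixes {α : Type*} (S : List α) (a : ℕ) :
    {L : ℕ | L ∈ Set.Ico (2 ^ a) (2 ^ (a + 1)) ∧
      ∃ U : List α, PrimitiveList U ∧ (U ++ U).length = L ∧ (U ++ U) <+: S}.ncard ≤ 2 := by
  set T := {L : ℕ | L ∈ Set.Ico (2 ^ a) (2 ^ (a + 1)) ∧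
      ∃ U : List α, PrimitiveList U ∧ (U ++ U).length = L ∧ (U ++ U) <+: S} with hT
  have hfin : T.Finite := Set.Finite.subset (Set.finite_Ico _ _) (fun x hx => hx.1)
  by_contra h
  push_neg at h
  rw [Set.two_lt_ncard hfin] at h
  obtain ⟨x, hx, y, hy, z, hz, hxy, hxz, hyz⟩ := h
  -- key: no three elements L1 < L2 < L3 in T
  have key : ∀ L1 L2 L3, L1 ∈ T → L2 ∈ T → L3 ∈ T → L1 < L2 → L2 < L3 → False := by
    intro L1 L2 L3 h1 h2 h3 o1 o2
    obtain ⟨⟨hlo1, hhi1⟩, u, hup, hul, hupre⟩ := h1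
    obtain ⟨⟨hlo2, hhi2⟩, v, hvp, hvl, hvpre⟩ := h2
    obtain ⟨⟨hlo3, hhi3⟩, w, hwp, hwl, hwpre⟩ := h3
    simp only [List.length_append] at hul hvl hwl
    have hpow : (2 : ℕ) ^ (a + 1) = 2 * 2 ^ a := by ring
    exact PRSq.key_lemma hupre hvpre hwpre hup (by omega) (by omega) (by omega)
  rcases lt_trichotomy x y with h1 | h1 | h1
  · rcases lt_trichotomy y z with h2 | h2 | h2
    · exact key x y z hx hy hz h1 h2
    · exact hyz h2
    · rcases lt_trichotomy x z with h3 | h3 | h3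
      · exact key x z y hx hz hy h3 h2
      · exact hxz h3
      · exact key z x y hz hx hy h3 h1
  · exact hxy h1
  · rcases lt_trichotomy x z with h2 | h2 | h2
    · exact key y x z hy hx hz h1 h2
    · exact hxz h2
    · rcases lt_trichotomy y z with h3 | h3 | h3
      · exact key y z x hy hz hx h3 h2
      · exact hyz h3
      · exact key z y x hz hy hx h3 h1
end

section
/- For any string S and any integer a ≥ 0, all prefixes of S with lengths in [2^a, 2^(a+1)) that are of the form V^ℓ with ℓ ≥ 3 are powers of a common primitive string U. That is, there exists a primitive string U such that every such prefix equals U^k for some k. -/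
open List

section CommonRoot

variable {α : Type*}

section listPow

@[simp]
lemma listPow_zero (V : List α) : listPow V 0 = [] := rfl

lemma listPow_succ (V : List α) (k : ℕ) : listPow V (k + 1) = V ++ listPow V k := by
  simp [listPow, replicate_succ]

@[simp]
lemma length_listPow (V : List α) (k : ℕ) : (listPow V k).length = k * V.length := by
  simp only [listPow, length_flatten, map_replicate, sum_replicate, smul_eq_mul]

lemma listPow_add (V : List α) (m n : ℕ) : listPow V (m + n) = listPow V m ++ listPow V n := by
  simp only [listPow, replicate_add, flatten_append]

lemma listPow_mul (V : List α) (m k : ℕ) : listPow V (m * k) = listPow (listPow V k) m := by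
  induction m with
  | zero => simp
  | succ m ih => rw [Nat.succ_mul, Nat.add_comm, listPow_add, ih, listPow_succ]

lemma prefix_listPow (V : List α) {k : ℕ} (hk : 0 < k) : V <+: listPow V k := by
  obtain ⟨j, rfl⟩ := Nat.exists_eq_add_of_lt hk
  exact listPow_succ V _ ▸ prefix_append _ _

lemma listPow_prefix_listPow (V : List α) {k m : ℕ} (h : k ≤ m) : listPow V k <+: listPow V m := by
  obtain ⟨j, rfl⟩ := Nat.exists_eq_add_of_le h
  exact ⟨listPow V j, (listPow_add V k j).symm⟩

lemma hasPeriod_listPow (V : List α) (k : ℕ) : (listPow V k).HasPeriod V.length := by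
  cases k with
  | zero => exact hasPeriod_empty _
  | succ k =>
    rw [HasPeriod, listPow_succ, take_left' rfl, ← listPow_succ, ← listPow_succ]
    exact listPow_prefix_listPow V (Nat.le_succ _)

end listPow

namespace List.HasPeriod

variable {w : List α} {p : ℕ}

lemma prefix_listPow_append (hp : w.HasPeriod p) (k : ℕ) : w <+: listPow (w.take p) k ++ w := by
  induction k with
  | zero => exact prefix_rfl
  | succ k ih =>
    rw [listPow_succ, append_assoc]
    exact hp.trans ((prefix_append_right_inj _).2 ih)

lemma eq_listPow_take {k : ℕ} (hp : w.HasPeriod p) (hk : w.length = p * k) :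
    w = listPow (w.take p) k := by
  have hlen : (listPow (w.take p) k).length = w.length := by
    rcases Nat.eq_zero_or_pos k with rfl | hk0
    · simp [hk]
    · rw [length_listPow, length_take, min_eq_left (hk ▸ Nat.le_mul_of_pos_right p hk0), hk,
        Nat.mul_comm]
  have h := prefix_iff_eq_take.1 (hp.prefix_listPow_append k)
  rwa [← hlen, take_left' rfl] at h

end List.HasPeriod

namespace List

noncomputable def minPeriod (w : List α) : ℕ := sInf {p | 0 < p ∧ w.HasPeriod p}

variable {w : List α} {q : ℕ}

lemma minPeriod_pos_and_hasPeriod (w : List α) : 0 < minPeriod w ∧ w.HasPeriod (minPeriod w) :=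
  Nat.sInf_mem (s := {p | 0 < p ∧ w.HasPeriod p})
    ⟨w.length + 1, Nat.succ_pos _, hasPeriod_of_length_le _ _ (Nat.le_succ _)⟩

lemma minPeriod_le (hq : 0 < q) (h : w.HasPeriod q) : minPeriod w ≤ q :=
  Nat.sInf_le ⟨hq, h⟩

lemma minPeriod_le_length (hw : w ≠ []) : minPeriod w ≤ w.length :=
  minPeriod_le (length_pos_iff.2 hw) (hasPeriod_of_length_le _ _ le_rfl)

lemma minPeriod_dvd (hq : w.HasPeriod q) (hlen : minPeriod w + q ≤ w.length) :
    minPeriod w ∣ q := by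
  obtain ⟨hr, hper⟩ := minPeriod_pos_and_hasPeriod w
  have hgcd : w.HasPeriod ((minPeriod w).gcd q) := hper.gcd hq (by omega)
  have : (minPeriod w).gcd q = minPeriod w :=
    le_antisymm (Nat.gcd_le_left _ hr) (minPeriod_le (Nat.gcd_pos_of_pos_left _ hr) hgcd)
  exact this ▸ Nat.gcd_dvd_right _ q

lemma HasPeriod.exists_take_eq_listPow_take_minPeriod (hq : w.HasPeriod q)
    (hlen : minPeriod w + q ≤ w.length) : ∃ k, w.take q = listPow (w.take (minPeriod w)) k := by
  obtain ⟨k, hk⟩ := minPeriod_dvd hq hlen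
  rcases Nat.eq_zero_or_pos k with rfl | hk0
  · exact ⟨0, by simp [hk]⟩
  have hrq : minPeriod w ≤ q := hk ▸ Nat.le_mul_of_pos_right _ hk0
  have hper : (w.take q).HasPeriod (minPeriod w) :=
    (minPeriod_pos_and_hasPeriod w).2.infix (take_prefix q w).isInfix
  refine ⟨k, ?_⟩
  rw [hper.eq_listPow_take (k := k) (by rw [length_take, min_eq_left (by omega), hk]),
    take_take, min_eq_left hrq]

lemma primitiveList_take_minPeriod {k : ℕ} (hw : w ≠ [])
    (hk : w = listPow (w.take (minPeriod w)) k) : PrimitiveList (w.take (minPeriod w)) := by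
  intro Y j hj hY
  obtain ⟨hr, -⟩ := minPeriod_pos_and_hasPeriod w
  have hrY : minPeriod w = j * Y.length := by
    simpa [min_eq_left (minPeriod_le_length hw)] using congrArg length hY
  have hYpos : 0 < Y.length := Nat.pos_of_mul_pos_left (hrY ▸ hr)
  have hperY : w.HasPeriod Y.length := by
    rw [hk, hY, ← listPow_mul]
    exact hasPeriod_listPow Y _
  have := minPeriod_le hYpos hperY
  have := Nat.mul_le_mul_right Y.length hj
  omega

end List

lemma primitiveList_singleton (x : α) : PrimitiveList [x] := by
  intro V k hk h
  have := congrArg length h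
  rw [length_listPow, length_singleton] at this
  rcases Nat.eq_zero_or_pos V.length with h0 | h0
  · simp [h0] at this
  · have := Nat.mul_le_mul hk h0
    omega

lemma exists_eq_listPow_take_minPeriod_of_prefix {P₀ P W V : List α} {m ℓ : ℕ}
    (hP₀ : P₀ = listPow W m) (hm : 3 ≤ m) (hP : P = listPow V ℓ) (hℓ : 3 ≤ ℓ)
    (hP₀P : P₀ <+: P) (hlen : P.length < 2 * P₀.length) :
    ∃ k, P = listPow (P₀.take (minPeriod P₀)) k := by
  subst hP₀ hP
  have hW := length_listPow W m
  have hV := length_listPow V ℓ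
  have hm3 := Nat.mul_le_mul_right W.length hm
  have hℓ3 := Nat.mul_le_mul_right V.length hℓ
  have hWpos : 0 < W.length := Nat.pos_of_ne_zero fun h => by rw [h, Nat.mul_zero] at hW; omega
  have hr := minPeriod_le hWpos (hasPeriod_listPow W m)
  have hVW : V.length ≤ (listPow W m).length := by omega
  have hVP₀ : V <+: listPow W m :=
    prefix_of_prefix_length_le (prefix_listPow V (by omega)) hP₀P hVW
  have hperV := (hasPeriod_listPow V ℓ).infix hP₀P.isInfix
  obtain ⟨k, hk⟩ := hperV.exists_take_eq_listPow_take_minPeriod (by omega)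
  refine ⟨ℓ * k, ?_⟩
  rw [prefix_iff_eq_take.1 hVP₀, hk, listPow_mul]

end CommonRoot

/-- All prefixes of `S` with lengths in `[2^a, 2^(a+1))` that are powers `V^ℓ` with `ℓ ≥ 3`
are powers of a common primitive string `U`. -/
theorem common_primitive_root_of_high_power_prefixes {α : Type*} [Nonempty α]
    (S : List α) (a : ℕ) :
    ∃ U : List α, PrimitiveList U ∧
      ∀ P : List α, P <+: S → P.length ∈ Set.Ico (2 ^ a) (2 ^ (a + 1)) →
        (∃ (V : List α) (ℓ : ℕ), 3 ≤ ℓ ∧ P = listPow V ℓ) →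
        ∃ k : ℕ, P = listPow U k := by
  obtain ⟨x⟩ := ‹Nonempty α›
  set Q : List α → Prop := fun P => P <+: S ∧ P.length ∈ Set.Ico (2 ^ a) (2 ^ (a + 1)) ∧
    ∃ (V : List α) (ℓ : ℕ), 3 ≤ ℓ ∧ P = listPow V ℓ
  by_cases hex : ∃ P, Q P
  swap
  · exact ⟨[x], primitiveList_singleton x, fun P h₁ h₂ h₃ => (hex ⟨P, h₁, h₂, h₃⟩).elim⟩
  obtain ⟨P₀, hP₀, hmin⟩ := (measure length).wf.has_min {P | Q P} hex
  obtain ⟨hP₀S, hP₀a, W, m, hm, hP₀W⟩ := hP₀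
  have key : ∀ P, Q P → ∃ k, P = listPow (P₀.take (minPeriod P₀)) k := by
    rintro P hP
    obtain ⟨hPS, ⟨-, hPa⟩, V, ℓ, hℓ, hPV⟩ := id hP
    have hP₀P : P₀ <+: P := prefix_of_prefix_length_le hP₀S hPS (not_lt.1 (hmin P hP))
    exact exists_eq_listPow_take_minPeriod_of_prefix hP₀W hm hPV hℓ hP₀P
      (by rw [pow_succ] at hPa; have := hP₀a.1; omega)
  obtain ⟨k, hk⟩ := key P₀ ⟨hP₀S, hP₀a, W, m, hm, hP₀W⟩
  have hP₀ : P₀ ≠ [] := ne_nil_of_length_pos (Nat.one_le_two_pow.trans hP₀a.1)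
  exact ⟨_, primitiveList_take_minPeriod hP₀ hk, fun P h₁ h₂ h₃ => key P ⟨h₁, h₂, h₃⟩⟩
end

section
/- Let m be a positive integer and P ⊆ [1..m]² a set of lattice points. Suppose that for every p ∈ P, the set of points of P strictly dominated by p (both coordinates strictly smaller) can be partitioned into at most two chains under the coordinatewise (dominance) order. Then there is an absolute constant C such that |P| ≤ C·m. -/
/-!
Two of three pairwise incomparable points strictly below `p` would share a chain, so `P` avoids
the permutation pattern of size `4` formed by three decreasing points below a fourth one, and the
Marcus–Tardos argument applies. For a pattern of size `k`, group the grid into `s × s` blocks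
with `(k-1)^2 < s`; the set of nonempty blocks avoids the pattern again. A block whose points
occupy fewer than `k` columns and fewer than `k` rows holds at most `(k-1)^2` points, any other
block at most `s^2`. A column of blocks has at most `(k-1) * choose s k` blocks whose points occupy
`k` columns: otherwise `k` of them share the same `k` columns by pigeonhole, and the pattern can be
placed in them. With the same bound for rows, `|P| ≤ (k-1)^2 |blocks| + O(n)`, and induction over
`n = s^t` gives `|P| = O(n)`.
-/

open Finset

lemma Nat.mem_Ico_of_div_eq {a c s : ℕ} (hs : 0 < s) (h : a / s = c) :
    a ∈ Ico (c * s) (c * s + s) := by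
  subst h
  exact mem_Ico.2 ⟨Nat.div_mul_le_self a s, Nat.lt_div_mul_add hs⟩

lemma Finset.card_le_card_image_fst_mul_card_image_snd {α β : Type*}
    [DecidableEq α] [DecidableEq β] (F : Finset (α × β)) :
    #F ≤ #(F.image Prod.fst) * #(F.image Prod.snd) :=
  (card_le_card subset_product).trans (card_product _ _).le

lemma exists_ne_le_of_mem_union_isChain {α : Type*} [Preorder α] {C₁ C₂ : Set α}
    (h₁ : IsChain (· ≤ ·) C₁) (h₂ : IsChain (· ≤ ·) C₂) (f : Fin 3 → α)
    (hf : ∀ i, f i ∈ C₁ ∪ C₂) : ∃ i j, i ≠ j ∧ f i ≤ f j := by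
  classical
  obtain ⟨i, j, hij, hsame⟩ :=
    Fintype.exists_ne_map_eq_of_card_lt (fun i => decide (f i ∈ C₁)) (by simp)
  have hchain : ∃ C, IsChain (· ≤ ·) C ∧ f i ∈ C ∧ f j ∈ C := by
    by_cases hi : f i ∈ C₁
    · exact ⟨C₁, h₁, hi, by simpa [hi] using hsame.symm⟩
    · exact ⟨C₂, h₂, (hf i).resolve_left hi,
        (hf j).resolve_left (by simpa [hi] using hsame.symm)⟩
  obtain ⟨C, hC, hiC, hjC⟩ := hchain
  rcases hC.total hiC hjC with h | h
  · exact ⟨i, j, hij, h⟩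
  · exact ⟨j, i, hij.symm, h⟩

namespace MarcusTardos

variable {k s : ℕ} {σ : Equiv.Perm (Fin k)} {P : Finset (ℕ × ℕ)}

def ContainsPerm (σ : Equiv.Perm (Fin k)) (P : Finset (ℕ × ℕ)) : Prop :=
  ∃ f : Fin k → ℕ × ℕ, (∀ i, f i ∈ P) ∧ (∀ i j, i < j → (f i).1 < (f j).1) ∧
    ∀ i j, σ i < σ j → (f i).2 < (f j).2

lemma containsPerm_of_image_swap (h : ContainsPerm σ.symm (P.image Prod.swap)) :
    ContainsPerm σ P := by
  obtain ⟨f, hfP, hf1, hf2⟩ := h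
  refine ⟨fun i => (f (σ i)).swap, fun i => ?_, fun i j hij => ?_,
    fun i j hij => hf1 _ _ hij⟩
  · obtain ⟨q, hq, hqf⟩ := mem_image.1 (hfP (σ i))
    simpa [← hqf] using hq
  · exact hf2 _ _ (by simpa using hij)

def block (s : ℕ) (q : ℕ × ℕ) : ℕ × ℕ := (q.1 / s, q.2 / s)

def blockFiber (s : ℕ) (P : Finset (ℕ × ℕ)) (b : ℕ × ℕ) : Finset (ℕ × ℕ) :=
  {q ∈ P | block s q = b}

lemma containsPerm_of_image_block (h : ContainsPerm σ (P.image (block s))) :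
    ContainsPerm σ P := by
  obtain ⟨f, hfP, hf1, hf2⟩ := h
  choose g hgP hgf using fun i => mem_image.1 (hfP i)
  refine ⟨g, hgP, fun i j hij => Nat.lt_of_div_lt_div (c := s) ?_,
    fun i j hij => Nat.lt_of_div_lt_div (c := s) ?_⟩
  · simpa [← hgf, block] using hf1 i j hij
  · simpa [← hgf, block] using hf2 i j hij

lemma blockFiber_image_swap (b : ℕ × ℕ) :
    blockFiber s (P.image Prod.swap) b.swap = (blockFiber s P b).image Prod.swap := by
  rw [blockFiber, filter_image]
  congr 1
  refine filter_congr fun q _ => ?_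
  simp only [block, Prod.fst_swap, Prod.snd_swap, Prod.ext_iff]
  exact and_comm

lemma card_blockFiber_le_sq (hs : 0 < s) (b : ℕ × ℕ) : #(blockFiber s P b) ≤ s ^ 2 := by
  have hsub :
      blockFiber s P b ⊆ Ico (b.1 * s) (b.1 * s + s) ×ˢ Ico (b.2 * s) (b.2 * s + s) := by
    intro q hq
    have hb : block s q = b := (mem_filter.1 hq).2
    exact mem_product.2 ⟨Nat.mem_Ico_of_div_eq hs (congrArg Prod.fst hb),
      Nat.mem_Ico_of_div_eq hs (congrArg Prod.snd hb)⟩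
  calc #(blockFiber s P b) ≤ s * s := by simpa using card_le_card hsub
    _ = s ^ 2 := (sq s).symm

lemma card_column_wide_le (hP : ¬ContainsPerm σ P) (hs : 0 < s) {j : ℕ}
    {D : Finset (ℕ × ℕ)}
    (hD : ∀ b ∈ D, b.1 = j ∧ k ≤ #((blockFiber s P b).image Prod.fst)) :
    #D ≤ (k - 1) * s.choose k := by
  by_contra! hlt
  have hpick : ∀ b ∈ D, ∃ c ∈ (Ico (j * s) (j * s + s)).powersetCard k,
      c ⊆ (blockFiber s P b).image Prod.fst := by
    intro b hb
    obtain ⟨c, hc, hck⟩ := exists_subset_card_eq (hD b hb).2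
    refine ⟨c, mem_powersetCard.2 ⟨fun x hx => ?_, hck⟩, hc⟩
    obtain ⟨q, hq, rfl⟩ := mem_image.1 (hc hx)
    rw [← (hD b hb).1]
    exact Nat.mem_Ico_of_div_eq hs (congrArg Prod.fst (mem_filter.1 hq).2)
  choose! g hg hgsub using hpick
  obtain ⟨c, hc, hcfib⟩ := exists_lt_card_fiber_of_mul_lt_card_of_maps_to hg
    (by rwa [card_powersetCard, Nat.card_Ico, Nat.add_sub_cancel_left, mul_comm])
  set H := {b ∈ D | g b = c}
  have hrows : k ≤ #(H.image Prod.snd) := by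
    have hH : k ≤ #H := by omega
    rwa [card_image_of_injOn fun a ha b hb hab =>
      Prod.ext (((hD a (mem_filter.1 ha).1).1).trans ((hD b (mem_filter.1 hb).1).1).symm) hab]
  set row := (H.image Prod.snd).orderEmbOfCardLe hrows
  set col := c.orderEmbOfFin (mem_powersetCard.1 hc).2
  -- the point of the pattern with height rank `σ i` is taken in the `σ i`-th block of `H`
  have hpt : ∀ i, ∃ q ∈ P, q.1 = col i ∧ q.2 / s = row (σ i) := by
    intro i
    obtain ⟨b, hbH, hbrow⟩ := mem_image.1 ((H.image Prod.snd).orderEmbOfCardLe_mem hrows (σ i))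
    obtain ⟨hbD, hbc⟩ := mem_filter.1 hbH
    have hcol : col i ∈ (blockFiber s P b).image Prod.fst :=
      hgsub b hbD (hbc ▸ c.orderEmbOfFin_mem _ i)
    obtain ⟨q, hq, hqcol⟩ := mem_image.1 hcol
    obtain ⟨hqP, hqb⟩ := mem_filter.1 hq
    exact ⟨q, hqP, hqcol, (congrArg Prod.snd hqb).trans hbrow⟩
  choose f hfP hfcol hfrow using hpt
  refine hP ⟨f, hfP, fun i j hij => ?_, fun i j hij => Nat.lt_of_div_lt_div (c := s) ?_⟩
  · rw [hfcol, hfcol]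
    exact col.strictMono hij
  · rw [hfrow, hfrow]
    exact row.strictMono hij

lemma card_row_tall_le (hP : ¬ContainsPerm σ P) (hs : 0 < s) {j : ℕ}
    {D : Finset (ℕ × ℕ)}
    (hD : ∀ b ∈ D, b.2 = j ∧ k ≤ #((blockFiber s P b).image Prod.snd)) :
    #D ≤ (k - 1) * s.choose k := by
  have hD' : ∀ b ∈ D.image Prod.swap,
      b.1 = j ∧ k ≤ #((blockFiber s (P.image Prod.swap) b).image Prod.fst) := by
    intro _ hb
    obtain ⟨b, hbD, rfl⟩ := mem_image.1 hb
    rw [blockFiber_image_swap, image_image]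
    exact hD b hbD
  simpa [card_image_of_injective _ Prod.swap_injective] using
    card_column_wide_le (σ := σ.symm) (mt containsPerm_of_image_swap hP) hs hD'

lemma card_le_of_image_block_subset (hP : ¬ContainsPerm σ P) (hs : 0 < s) {N : ℕ}
    (hN : P.image (block s) ⊆ range N ×ˢ range N) :
    #P ≤ (k - 1) ^ 2 * #(P.image (block s)) + 2 * s ^ 2 * ((k - 1) * s.choose k) * N := by
  set B := P.image (block s)
  set W := (k - 1) * s.choose k
  set wide := fun b => k ≤ #((blockFiber s P b).image Prod.fst)
  set tall := fun b => k ≤ #((blockFiber s P b).image Prod.snd)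
  have hfiber : ∀ b, #(blockFiber s P b) ≤
      (k - 1) ^ 2 + (if wide b then s ^ 2 else 0) + (if tall b then s ^ 2 else 0) := by
    intro b
    have hsq := card_blockFiber_le_sq (P := P) hs b
    by_cases hw : wide b
    · rw [if_pos hw]
      omega
    by_cases ht : tall b
    · rw [if_pos ht]
      omega
    rw [if_neg hw, if_neg ht, sq]
    exact (card_le_card_image_fst_mul_card_image_snd _).trans
      (Nat.mul_le_mul (by simp only [wide] at hw; omega) (by simp only [tall] at ht; omega))
  have hwide : #(B.filter wide) ≤ W * N := by
    simpa using card_le_mul_card_image_of_maps_to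
      (fun b hb => (mem_product.1 (hN (mem_filter.1 hb).1)).1) W fun j _ =>
        card_column_wide_le hP hs fun b hb =>
          ⟨(mem_filter.1 hb).2, (mem_filter.1 (mem_filter.1 hb).1).2⟩
  have htall : #(B.filter tall) ≤ W * N := by
    simpa using card_le_mul_card_image_of_maps_to
      (fun b hb => (mem_product.1 (hN (mem_filter.1 hb).1)).2) W fun j _ =>
        card_row_tall_le hP hs fun b hb =>
          ⟨(mem_filter.1 hb).2, (mem_filter.1 (mem_filter.1 hb).1).2⟩
  calc #P = ∑ b ∈ B, #(blockFiber s P b) := card_eq_sum_card_image _ _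
    _ ≤ ∑ b ∈ B,
        ((k - 1) ^ 2 + (if wide b then s ^ 2 else 0) + (if tall b then s ^ 2 else 0)) :=
      sum_le_sum fun b _ => hfiber b
    _ = (k - 1) ^ 2 * #B + s ^ 2 * #(B.filter wide) + s ^ 2 * #(B.filter tall) := by
      rw [sum_add_distrib, sum_add_distrib, ← sum_filter, ← sum_filter]
      simp only [sum_const, smul_eq_mul, mul_comm]
    _ ≤ (k - 1) ^ 2 * #B + 2 * s ^ 2 * W * N := by
      linarith [Nat.mul_le_mul_left (s ^ 2) hwide, Nat.mul_le_mul_left (s ^ 2) htall]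

-- chosen so that `(k - 1) ^ 2 * C + (C - 1) ≤ s * C`, which closes the induction over `s ^ t`
def marcusTardosConst (k s : ℕ) : ℕ := 2 * s ^ 2 * ((k - 1) * s.choose k) + 1

lemma card_le_of_subset_range_pow (hs : (k - 1) ^ 2 < s) (t : ℕ)
    (hP : ¬ContainsPerm σ P) (hPt : P ⊆ range (s ^ t) ×ˢ range (s ^ t)) :
    #P ≤ marcusTardosConst k s * s ^ t := by
  induction t generalizing P with
  | zero =>
    have h1 := card_le_card hPt
    simp only [pow_zero, range_one, card_product, card_singleton] at h1
    simpa [marcusTardosConst] using h1.trans (Nat.le_add_left 1 _)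
  | succ t ih =>
    have hs0 : 0 < s := by omega
    have hB : P.image (block s) ⊆ range (s ^ t) ×ˢ range (s ^ t) := by
      intro b hb
      obtain ⟨q, hq, rfl⟩ := mem_image.1 hb
      obtain ⟨h1, h2⟩ := mem_product.1 (hPt hq)
      simp only [block, mem_product, mem_range, Nat.div_lt_iff_lt_mul hs0, ← pow_succ]
      exact ⟨mem_range.1 h1, mem_range.1 h2⟩
    have hBcard := ih (mt containsPerm_of_image_block hP) hB
    have hrec := card_le_of_image_block_subset hP hs0 hB
    set C := marcusTardosConst k s
    have hC : 2 * s ^ 2 * ((k - 1) * s.choose k) = C - 1 := rfl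
    calc #P ≤ (k - 1) ^ 2 * (C * s ^ t) + (C - 1) * s ^ t :=
          hrec.trans (by rw [hC]; gcongr)
      _ ≤ (k - 1) ^ 2 * (C * s ^ t) + C * s ^ t := by gcongr; exact Nat.sub_le C 1
      _ = ((k - 1) ^ 2 + 1) * (C * s ^ t) := by ring
      _ ≤ s * (C * s ^ t) := by gcongr; exact hs
      _ = C * s ^ (t + 1) := by ring

theorem card_le_of_not_containsPerm (hs1 : 1 < s) (hs : (k - 1) ^ 2 < s) {n : ℕ}
    (hP : ¬ContainsPerm σ P) (hn : P ⊆ range n ×ˢ range n) :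
    #P ≤ marcusTardosConst k s * s * n := by
  rcases Nat.eq_zero_or_pos n with rfl | hn0
  · simp [subset_empty.1 (by simpa using hn)]
  have hsub : range n ⊆ range (s ^ (Nat.log s n + 1)) :=
    range_subset_range.2 (Nat.lt_pow_succ_log_self hs1 n).le
  calc #P ≤ marcusTardosConst k s * s ^ (Nat.log s n + 1) :=
        card_le_of_subset_range_pow hs _ hP (hn.trans (product_subset_product hsub hsub))
    _ ≤ marcusTardosConst k s * s * n := by
        rw [pow_succ, mul_assoc, mul_comm (s ^ _)]
        exact Nat.mul_le_mul_left _ (Nat.mul_le_mul_left _ (Nat.pow_log_le_self s hn0.ne'))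

end MarcusTardos

open MarcusTardos

-- `Equiv.swap 0 2` is the permutation matrix with ones at `(1,3), (2,2), (3,1), (4,4)`
lemma not_containsPerm_of_dominated_two_chains {P : Finset (ℕ × ℕ)}
    (hP : ∀ p ∈ P, ∃ C₁ C₂ : Set (ℕ × ℕ),
      {q : ℕ × ℕ | q ∈ P ∧ q.1 < p.1 ∧ q.2 < p.2} = C₁ ∪ C₂ ∧
      IsChain (· ≤ ·) C₁ ∧ IsChain (· ≤ ·) C₂) :
    ¬ContainsPerm (Equiv.swap 0 2 : Equiv.Perm (Fin 4)) P := by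
  set σ : Equiv.Perm (Fin 4) := Equiv.swap 0 2
  have hσ_anti : ∀ i j : Fin 3, i < j → σ j.castSucc < σ i.castSucc := by decide
  have hσ_top : ∀ i : Fin 3, σ i.castSucc < σ 3 := by decide
  rintro ⟨f, hfP, hf1, hf2⟩
  obtain ⟨C₁, C₂, hC, h₁, h₂⟩ := hP (f 3) (hfP 3)
  have hdom : ∀ i : Fin 3, f i.castSucc ∈ C₁ ∪ C₂ := fun i => by
    rw [← hC]
    exact ⟨hfP _, hf1 _ _ (Fin.castSucc_lt_last i), hf2 _ _ (hσ_top i)⟩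
  obtain ⟨i, j, hij, hle⟩ := exists_ne_le_of_mem_union_isChain h₁ h₂ _ hdom
  rcases hij.lt_or_gt with h | h
  · exact (hf2 _ _ (hσ_anti i j h)).not_ge hle.2
  · exact (hf1 _ _ (Fin.castSucc_lt_castSucc_iff.2 h)).not_ge hle.1

/-- If every point of `P ⊆ [1..m]²` strictly dominates a set of points of `P` that can be
partitioned into at most two chains (under the coordinatewise dominance order), then
`|P| ≤ C · m` for an absolute constant `C`. -/
theorem geom_lemma :
    ∃ C : ℕ, ∀ m : ℕ, 0 < m → ∀ P : Finset (ℕ × ℕ),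
      (∀ p ∈ P, p.1 ∈ Finset.Icc 1 m ∧ p.2 ∈ Finset.Icc 1 m) →
      (∀ p ∈ P, ∃ C1 C2 : Set (ℕ × ℕ),
        {q : ℕ × ℕ | q ∈ P ∧ q.1 < p.1 ∧ q.2 < p.2} = C1 ∪ C2 ∧
        IsChain (· ≤ ·) C1 ∧ IsChain (· ≤ ·) C2) →
      P.card ≤ C * m := by
  refine ⟨2 * (marcusTardosConst 4 16 * 16), fun m hm P hbound hchains => ?_⟩
  have hP : P ⊆ range (m + 1) ×ˢ range (m + 1) := fun p hp => by
    obtain ⟨h1, h2⟩ := hbound p hp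
    simp only [mem_product, mem_range, mem_Icc] at h1 h2 ⊢
    omega
  calc #P ≤ marcusTardosConst 4 16 * 16 * (m + 1) :=
        card_le_of_not_containsPerm (by norm_num) (by norm_num)
          (not_containsPerm_of_dominated_two_chains hchains) hP
    _ ≤ marcusTardosConst 4 16 * 16 * (2 * m) := by gcongr; omega
    _ = 2 * (marcusTardosConst 4 16 * 16) * m := by ring
end

section
/- Let a, b be non-negative integers and let W and Z be distinct 2D strings whose heights lie in [2^a, 2^(a+1)) and whose widths lie in [2^b, 2^(b+1)). If W^{3,3} and Z^{3,3} both occur at the same position of a 2D string A, then at least one of W and Z is not primitive. -/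
/-
Read the common window of `A` at `(i, j)` as one array `f`. Every column of `W` is a column of
`f` of length `3 h₁`, which has the vertical periods `h₁` and `h₂`; if `h₁ < h₂ < 2 h₁` this
length is at least `h₁ + h₂`, so by the Fine–Wilf periodicity lemma the column also has period
`g = gcd h₁ h₂`. Hence `W` tiles by its top `g` rows, and `g < h₁` because `h₁ ∤ h₂`. If the
heights agree, the same argument on the transposes compares the widths; if both dimensions
agree, the two occurrences force `W = Z`.
-/

theorem pos_right_of_fin_mul {x m : ℕ} (i : Fin (x * m)) : 0 < m := by
  rcases Nat.eq_zero_or_pos m with h | h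
  · subst h; have := i.isLt; omega
  · exact h

/-- The `x × y` tiling `A^{x,y}` of an `m × n` 2D string `A`. -/
def tile {α : Type*} {m n : ℕ} (A : Fin m → Fin n → α) (x y : ℕ) :
    Fin (x * m) → Fin (y * n) → α := fun i j =>
  A ⟨i.1 % m, Nat.mod_lt _ (pos_right_of_fin_mul i)⟩
    ⟨j.1 % n, Nat.mod_lt _ (pos_right_of_fin_mul j)⟩

/-- The 2D string `P` (of size `hp × wp`) occurs at position `(i, j)` of `A` (of size `m × n`). -/
def Occurs {α : Type*} {hp wp m n : ℕ} (P : Fin hp → Fin wp → α)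
    (A : Fin m → Fin n → α) (i j : ℕ) : Prop :=
  ∃ (h1 : i + hp ≤ m) (h2 : j + wp ≤ n),
    ∀ (a : Fin hp) (b : Fin wp),
      A ⟨i + a.1, by have := a.isLt; omega⟩ ⟨j + b.1, by have := b.isLt; omega⟩ = P a b

/-- A 2D string `A` of size `m × n` is a tiling of its top-left `h × w` block. -/
def IsTileOf {α : Type*} {m n : ℕ} (A : Fin m → Fin n → α) (h w : ℕ) : Prop :=
  ∃ (_ : 0 < h) (_ : 0 < w), h ∣ m ∧ w ∣ n ∧
    ∀ (i : Fin m) (j : Fin n),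
      A i j = A ⟨i.1 % h, Nat.lt_of_le_of_lt (Nat.mod_le _ _) i.isLt⟩
               ⟨j.1 % w, Nat.lt_of_le_of_lt (Nat.mod_le _ _) j.isLt⟩

/-- A 2D string is primitive if it is not a non-trivial tiling of a smaller 2D string. -/
def Primitive2D {α : Type*} {m n : ℕ} (A : Fin m → Fin n → α) : Prop :=
  ∀ h w : ℕ, IsTileOf A h w → h = m ∧ w = n

open Function

theorem List.hasPeriod_map_range_iff {α : Type*} {g : ℕ → α} {L p : ℕ} :
    ((List.range L).map g).HasPeriod p ↔ ∀ x < L, g x = g (x % p) := by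
  rw [List.hasPeriod_iff_forall_getElem?_mod]
  simp only [List.length_map, List.length_range, List.getElem?_map]
  refine forall₂_congr fun x hx => ?_
  rw [List.getElem?_range hx, List.getElem?_range ((Nat.mod_le x p).trans_lt hx)]
  simp

section TwoDimensional

variable {α : Type*} {m n : ℕ}

theorem tile_apply_of_lt (A : Fin m → Fin n → α) {k l : ℕ} (x : Fin (k * m)) (y : Fin (l * n))
    (hx : (x : ℕ) < m) (hy : (y : ℕ) < n) : tile A k l x y = A ⟨x, hx⟩ ⟨y, hy⟩ := by
  simp only [tile, Nat.mod_eq_of_lt hx, Nat.mod_eq_of_lt hy]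

theorem apply_eq_of_eq_tile {A : Fin m → Fin n → α} {k l : ℕ} {f : ℕ → ℕ → α}
    (hf : ∀ (x : Fin (k * m)) (y : Fin (l * n)), f x y = tile A k l x y) (hk : 0 < k)
    (hl : 0 < l) (x : Fin m) (y : Fin n) : f x y = A x y := by
  have hxk : (x : ℕ) < k * m := x.2.trans_le (Nat.le_mul_of_pos_left m hk)
  have hyl : (y : ℕ) < l * n := y.2.trans_le (Nat.le_mul_of_pos_left n hl)
  rw [hf ⟨x, hxk⟩ ⟨y, hyl⟩, tile_apply_of_lt A _ _ x.2 y.2]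

theorem apply_eq_apply_mod_of_eq_tile {A : Fin m → Fin n → α} {k l : ℕ} {f : ℕ → ℕ → α}
    (hf : ∀ (x : Fin (k * m)) (y : Fin (l * n)), f x y = tile A k l x y) {x y : ℕ}
    (hx : x < k * m) (hy : y < l * n) : f x y = f (x % m) y := by
  rw [hf ⟨x, hx⟩ ⟨y, hy⟩, hf ⟨x % m, (Nat.mod_le x m).trans_lt hx⟩ ⟨y, hy⟩]
  simp only [tile, Nat.mod_mod]

theorem IsTileOf.swap {A : Fin m → Fin n → α} {h w : ℕ} (hA : IsTileOf (swap A) w h) :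
    IsTileOf A h w := by
  obtain ⟨hw, hh, hwn, hhm, hA⟩ := hA
  exact ⟨hh, hw, hhm, hwn, fun i j => hA j i⟩

theorem Primitive2D.swap {A : Fin m → Fin n → α} (hA : Primitive2D A) :
    Primitive2D (swap A) := fun h w ht => (hA w h ht.swap).symm

theorem not_primitive2D_of_lt_of_lt_two_mul {h1 w1 h2 w2 : ℕ} {W : Fin h1 → Fin w1 → α}
    {Z : Fin h2 → Fin w2 → α} {f : ℕ → ℕ → α}
    (hWf : ∀ (x : Fin (3 * h1)) (y : Fin (3 * w1)), f x y = tile W 3 3 x y)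
    (hZf : ∀ (x : Fin (3 * h2)) (y : Fin (3 * w2)), f x y = tile Z 3 3 x y)
    (hw1 : 0 < w1) (hlt : h1 < h2) (hlt' : h2 < 2 * h1) (hw : w1 ≤ 3 * w2) :
    ¬ Primitive2D W := by
  set g := h1.gcd h2
  have hg : 0 < g := Nat.gcd_pos_of_pos_left _ (by omega)
  have hgh : g ≠ h1 := fun e => by
    have := Nat.eq_of_dvd_of_lt_two_mul (by omega) (e ▸ Nat.gcd_dvd_right h1 h2) hlt'
    omega
  have hcol : ∀ y < w1, ∀ x < 3 * h1, f x y = f (x % g) y := by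
    intro y hy
    rw [← List.hasPeriod_map_range_iff]
    refine List.HasPeriod.gcd ?_ ?_ (by simp; omega) <;> rw [List.hasPeriod_map_range_iff] <;>
      intro x hx
    · exact apply_eq_apply_mod_of_eq_tile hWf hx (by omega)
    · exact apply_eq_apply_mod_of_eq_tile hZf (by omega) (by omega)
  intro hW
  refine hgh (hW g w1 ⟨hg, hw1, Nat.gcd_dvd_left _ _, dvd_rfl, fun x y => ?_⟩).1
  have hxg : x % g < h1 := (Nat.mod_le _ _).trans_lt x.2
  calc W x y = f x y := (apply_eq_of_eq_tile hWf (by norm_num) (by norm_num) x y).symm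
    _ = f (x % g) y := hcol y y.2 x (by omega)
    _ = W ⟨x % g, _⟩ ⟨y % w1, _⟩ := by
      rw [apply_eq_of_eq_tile hWf (by norm_num) (by norm_num) ⟨x % g, hxg⟩ y]
      simp only [Nat.mod_eq_of_lt y.2]

def shiftPad (A : Fin m → Fin n → α) (d : α) (i j : ℕ) : ℕ → ℕ → α := fun x y =>
  if h : i + x < m ∧ j + y < n then A ⟨i + x, h.1⟩ ⟨j + y, h.2⟩ else d

theorem Occurs.shiftPad_apply {hp wp : ℕ} {P : Fin hp → Fin wp → α} {A : Fin m → Fin n → α}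
    {i j : ℕ} (ho : Occurs P A i j) (d : α) (x : Fin hp) (y : Fin wp) :
    shiftPad A d i j x y = P x y := by
  obtain ⟨hm, hn, hP⟩ := ho
  rw [shiftPad, dif_pos ⟨by omega, by omega⟩]
  exact hP x y

end TwoDimensional

/-- If `W` and `Z` are distinct 2D strings with heights in `[2^a, 2^(a+1))` and widths in
`[2^b, 2^(b+1))`, and `W^{3,3}` and `Z^{3,3}` occur at the same position of `A`, then at
least one of `W` and `Z` is not primitive. -/
theorem not_both_primitive {α : Type*} {h1 w1 h2 w2 m n : ℕ} (a b : ℕ)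
    (W : Fin h1 → Fin w1 → α) (Z : Fin h2 → Fin w2 → α) (A : Fin m → Fin n → α)
    (hW1 : 2 ^ a ≤ h1) (hW2 : h1 < 2 ^ (a + 1))
    (hZ1 : 2 ^ a ≤ h2) (hZ2 : h2 < 2 ^ (a + 1))
    (hW3 : 2 ^ b ≤ w1) (hW4 : w1 < 2 ^ (b + 1))
    (hZ3 : 2 ^ b ≤ w2) (hZ4 : w2 < 2 ^ (b + 1))
    (hne : ¬ ∃ (hh : h1 = h2) (hw : w1 = w2),
      ∀ (i : Fin h1) (j : Fin w1), W i j = Z (Fin.cast hh i) (Fin.cast hw j))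
    (i j : ℕ) (ho1 : Occurs (tile W 3 3) A i j) (ho2 : Occurs (tile Z 3 3) A i j) :
    ¬ Primitive2D W ∨ ¬ Primitive2D Z := by
  have ha : 0 < 2 ^ a ∧ 2 ^ (a + 1) = 2 * 2 ^ a := ⟨by positivity, by ring⟩
  have hb : 0 < 2 ^ b ∧ 2 ^ (b + 1) = 2 * 2 ^ b := ⟨by positivity, by ring⟩
  have hh1 : 0 < h1 := by omega
  have hw1 : 0 < w1 := by omega
  set d := W ⟨0, hh1⟩ ⟨0, hw1⟩
  set f := shiftPad A d i j
  have hWf := ho1.shiftPad_apply d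
  have hZf := ho2.shiftPad_apply d
  rcases lt_trichotomy h1 h2 with hh | rfl | hh
  · exact .inl (not_primitive2D_of_lt_of_lt_two_mul hWf hZf hw1 hh (by omega) (by omega))
  · rcases lt_trichotomy w1 w2 with hw | rfl | hw
    · exact .inl fun hW => not_primitive2D_of_lt_of_lt_two_mul (W := swap W) (Z := swap Z)
        (f := swap f) (fun x y => hWf y x) (fun x y => hZf y x) hh1 hw (by omega) (by omega)
        hW.swap
    · refine absurd ⟨rfl, rfl, fun x y => ?_⟩ hne
      exact (apply_eq_of_eq_tile hWf three_pos three_pos x y).symm.trans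
        (apply_eq_of_eq_tile hZf three_pos three_pos x y)
    · exact .inr fun hZ => not_primitive2D_of_lt_of_lt_two_mul (W := swap Z) (Z := swap W)
        (f := swap f) (fun x y => hZf y x) (fun x y => hWf y x) hh1 hw (by omega) (by omega)
        hZ.swap
  · exact .inr (not_primitive2D_of_lt_of_lt_two_mul hZf hWf (by omega) hh (by omega) (by omega))
end

section
/- Let R1, R2 be primitive 2D strings such that the pairs (⌊log₂ height(R1)⌋, ⌊log₂ width(R1)⌋) and (⌊log₂ height(R2)⌋, ⌊log₂ width(R2)⌋) form an antichain under coordinatewise dominance, with ⌊log₂ height(R1)⌋ < ⌊log₂ height(R2)⌋ and ⌊log₂ width(R1)⌋ > ⌊log₂ width(R2)⌋. Then R1 and R2 cannot both horizontally span the same 2D string R. -/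
/-- `p` is a horizontal period of the `m × n` 2D string `A`. -/
def HPeriod {α : Type*} {m n : ℕ} (A : Fin m → Fin n → α) (p : ℕ) : Prop :=
  0 < p ∧ p ≤ n ∧ ∀ (i : Fin m) (j : ℕ) (h : j + p < n),
    A i ⟨j, by omega⟩ = A i ⟨j + p, h⟩

/-- `S` (of size `h × w`) horizontally spans `T` (of size `H × W`): `3h ≤ 2H`, `w < W`, and
the topmost `3h` rows of `T^{2,2}` equal `S^{3,y}` for some `y ≥ 2`. -/
def HSpans {α : Type*} {h w H W : ℕ} (S : Fin h → Fin w → α) (T : Fin H → Fin W → α) : Prop :=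
  ∃ (hh : 0 < h) (hw : 0 < w) (hH : 0 < H) (hW : 0 < W),
    3 * h ≤ 2 * H ∧ w < W ∧
    ∃ y : ℕ, 2 ≤ y ∧ 2 * W = y * w ∧
      ∀ i j : ℕ, i < 3 * h → j < 2 * W →
        T ⟨i % H, Nat.mod_lt _ hH⟩ ⟨j % W, Nat.mod_lt _ hW⟩ =
        S ⟨i % h, Nat.mod_lt _ hh⟩ ⟨j % w, Nat.mod_lt _ hw⟩


private lemma per_mul {α : Type*} (f : ℕ → α) (p : ℕ) (hp : ∀ j, f (j + p) = f j) :
    ∀ k j, f (j + p * k) = f j := by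
  intro k
  induction k with
  | zero => simp
  | succ n ih =>
    intro j
    have : j + p * (n + 1) = (j + p * n) + p := by ring
    rw [this, hp, ih]

private lemma per_gcd {α : Type*} (f : ℕ → α) :
    ∀ a b : ℕ, (∀ j, f (j + a) = f j) → (∀ j, f (j + b) = f j) →
      ∀ j, f (j + Nat.gcd a b) = f j := by
  intro a b
  induction a, b using Nat.gcd.induction with
  | H0 n =>
    intro _ hn j
    simpa using hn j
  | H1 m n hm ih =>
    intro hm' hn' j
    rw [Nat.gcd_rec]
    apply ih _ hm'
    intro j
    have h1 : f (j + n % m + m * (n / m)) = f (j + n % m) := per_mul f m hm' _ _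
    have h2 : j + n % m + m * (n / m) = j + n := by
      rw [Nat.add_assoc, Nat.mod_add_div]
    rw [h2] at h1
    rw [← h1, hn']

/-- Two primitive 2D strings whose dyadic dimension classes form an antichain cannot both
horizontally span the same 2D string `R`. -/
theorem onechain {α : Type*} {h1 w1 h2 w2 H W : ℕ}
    (R1 : Fin h1 → Fin w1 → α) (R2 : Fin h2 → Fin w2 → α) (R : Fin H → Fin W → α)
    (hp1 : Primitive2D R1) (hp2 : Primitive2D R2)
    (hh : Nat.log 2 h1 < Nat.log 2 h2) (hw : Nat.log 2 w2 < Nat.log 2 w1) :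
    ¬ (HSpans R1 R ∧ HSpans R2 R) := by
  rintro ⟨⟨hh1, hw1, hH, hW, hHle1, hwW1, y1, hy1, hWy1, heq1⟩,
          ⟨hh2, hw2, _, _, hHle2, hwW2, y2, hy2, hWy2, heq2⟩⟩
  -- h1 < h2 and w2 < w1 from the log hypotheses
  have hlt : h1 < h2 := by
    by_contra hcon
    exact absurd (Nat.log_mono_right (le_of_not_gt hcon)) (Nat.not_le.mpr hh)
  have wlt : w2 < w1 := by
    by_contra hcon
    exact absurd (Nat.log_mono_right (le_of_not_gt hcon)) (Nat.not_le.mpr hw)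
  set d := Nat.gcd w1 w2 with hd
  have hd0 : 0 < d := Nat.gcd_pos_of_pos_left _ hw1
  have hdw1 : d ∣ w1 := Nat.gcd_dvd_left _ _
  have hdlt : d < w1 := lt_of_le_of_lt (Nat.le_of_dvd hw2 (Nat.gcd_dvd_right _ _)) wlt
  -- For each row i < h1, the extended row has period d
  have key : ∀ i : ℕ, i < h1 → ∀ j : ℕ,
      R ⟨i % H, Nat.mod_lt _ hH⟩ ⟨(j + d) % W, Nat.mod_lt _ hW⟩ =
      R ⟨i % H, Nat.mod_lt _ hH⟩ ⟨j % W, Nat.mod_lt _ hW⟩ := by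
    intro i hi
    set g : ℕ → α := fun j => R ⟨i % H, Nat.mod_lt _ hH⟩ ⟨j % W, Nat.mod_lt _ hW⟩ with hg
    have hgmod : ∀ j, g j = g (j % W) := by
      intro j
      simp only [hg]
      congr 1
      exact Fin.ext (Nat.mod_mod_of_dvd j (dvd_refl W)).symm
    -- period w1
    have hp1' : ∀ j, g (j + w1) = g j := by
      intro j
      have hjW : j % W < W := Nat.mod_lt _ hW
      have h2W : j % W + w1 < 2 * W := by omega
      have hWle : j % W < 2 * W := by omega
      have e1 : g (j % W) = R1 ⟨i % h1, Nat.mod_lt _ hh1⟩ ⟨(j % W) % w1, Nat.mod_lt _ hw1⟩ := by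
        have := heq1 i (j % W) (by omega) hWle
        simpa [hg, Nat.mod_mod] using this
      have e2 : g (j % W + w1) =
          R1 ⟨i % h1, Nat.mod_lt _ hh1⟩ ⟨(j % W + w1) % w1, Nat.mod_lt _ hw1⟩ := by
        have := heq1 i (j % W + w1) (by omega) h2W
        simpa [hg] using this
      have emod : (j % W + w1) % w1 = (j % W) % w1 := Nat.add_mod_right _ _
      have e3 : g (j + w1) = g (j % W + w1) := by
        simp only [hg]
        congr 1
        exact Fin.ext (by simp [Nat.add_mod, Nat.mod_mod])
      have e4 : R1 ⟨i % h1, Nat.mod_lt _ hh1⟩ ⟨(j % W + w1) % w1, Nat.mod_lt _ hw1⟩ =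
          R1 ⟨i % h1, Nat.mod_lt _ hh1⟩ ⟨(j % W) % w1, Nat.mod_lt _ hw1⟩ := by
        congr 1
        exact Fin.ext emod
      rw [e3, e2, e4, ← e1, ← hgmod]
    -- period w2
    have hp2' : ∀ j, g (j + w2) = g j := by
      intro j
      have hjW : j % W < W := Nat.mod_lt _ hW
      have h2W : j % W + w2 < 2 * W := by omega
      have hWle : j % W < 2 * W := by omega
      have hi2 : i < 3 * h2 := by omega
      have e1 : g (j % W) = R2 ⟨i % h2, Nat.mod_lt _ hh2⟩ ⟨(j % W) % w2, Nat.mod_lt _ hw2⟩ := by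
        have := heq2 i (j % W) hi2 hWle
        simpa [hg, Nat.mod_mod] using this
      have e2 : g (j % W + w2) =
          R2 ⟨i % h2, Nat.mod_lt _ hh2⟩ ⟨(j % W + w2) % w2, Nat.mod_lt _ hw2⟩ := by
        have := heq2 i (j % W + w2) hi2 h2W
        simpa [hg] using this
      have emod : (j % W + w2) % w2 = (j % W) % w2 := Nat.add_mod_right _ _
      have e3 : g (j + w2) = g (j % W + w2) := by
        simp only [hg]
        congr 1
        exact Fin.ext (by simp [Nat.add_mod, Nat.mod_mod])
      have e4 : R2 ⟨i % h2, Nat.mod_lt _ hh2⟩ ⟨(j % W + w2) % w2, Nat.mod_lt _ hw2⟩ =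
          R2 ⟨i % h2, Nat.mod_lt _ hh2⟩ ⟨(j % W) % w2, Nat.mod_lt _ hw2⟩ := by
        congr 1
        exact Fin.ext emod
      rw [e3, e2, e4, ← e1, ← hgmod]
    exact per_gcd g w1 w2 hp1' hp2'
  -- R1 is a tile of its h1 × d block
  have htile : IsTileOf R1 h1 d := by
    refine ⟨hh1, hd0, dvd_refl _, hdw1, ?_⟩
    intro i j
    have hiH : (i.1 : ℕ) < 3 * h1 := by omega
    have hjd : j.1 % d < w1 := lt_of_lt_of_le (Nat.mod_lt _ hd0) (le_of_lt hdlt)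
    -- R1 i j = g j  and  R1 i (j%d) = g (j%d), and g j = g (j%d) by d-periodicity
    have e1 : R ⟨i.1 % H, Nat.mod_lt _ hH⟩ ⟨j.1 % W, Nat.mod_lt _ hW⟩ =
        R1 ⟨i.1 % h1, Nat.mod_lt _ hh1⟩ ⟨j.1 % w1, Nat.mod_lt _ hw1⟩ :=
      heq1 i.1 j.1 hiH (by omega)
    have e2 : R ⟨i.1 % H, Nat.mod_lt _ hH⟩ ⟨(j.1 % d) % W, Nat.mod_lt _ hW⟩ =
        R1 ⟨(i.1 : ℕ) % h1, Nat.mod_lt _ hh1⟩ ⟨(j.1 % d) % w1, Nat.mod_lt _ hw1⟩ :=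
      heq1 i.1 (j.1 % d) hiH (by omega)
    set g1 : ℕ → α := fun j => R ⟨i.1 % H, Nat.mod_lt _ hH⟩ ⟨j % W, Nat.mod_lt _ hW⟩ with hg1
    have gbase : ∀ j, g1 (j + d) = g1 j := fun j => key i.1 i.isLt j
    have gper : ∀ k j, g1 (j + d * k) = g1 j := per_mul g1 d gbase
    have gj : R ⟨i.1 % H, Nat.mod_lt _ hH⟩ ⟨j.1 % W, Nat.mod_lt _ hW⟩ =
        R ⟨i.1 % H, Nat.mod_lt _ hH⟩ ⟨(j.1 % d) % W, Nat.mod_lt _ hW⟩ := by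
      have h5 := gper (j.1 / d) (j.1 % d)
      rw [Nat.mod_add_div, hg1] at h5
      simpa using h5
    have ei : (i.1 : ℕ) % h1 = i.1 := Nat.mod_eq_of_lt i.isLt
    have ej : (j.1 : ℕ) % w1 = j.1 := Nat.mod_eq_of_lt j.isLt
    have ejd : (j.1 % d) % w1 = j.1 % d := Nat.mod_eq_of_lt hjd
    calc R1 i j = R1 ⟨i.1 % h1, Nat.mod_lt _ hh1⟩ ⟨j.1 % w1, Nat.mod_lt _ hw1⟩ := by
          congr 1 <;> exact Fin.ext (by simp [ei, ej])
      _ = R ⟨i.1 % H, Nat.mod_lt _ hH⟩ ⟨j.1 % W, Nat.mod_lt _ hW⟩ := e1.symm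
      _ = R ⟨i.1 % H, Nat.mod_lt _ hH⟩ ⟨(j.1 % d) % W, Nat.mod_lt _ hW⟩ := gj
      _ = R1 ⟨(i.1 : ℕ) % h1, Nat.mod_lt _ hh1⟩ ⟨(j.1 % d) % w1, Nat.mod_lt _ hw1⟩ := e2
      _ = R1 ⟨i.1 % h1, _⟩ ⟨j.1 % d, _⟩ := by
          congr 1
          exact Fin.ext (by simp [ejd])
  exact absurd (hp1 h1 d htile).2 (Nat.ne_of_lt hdlt)
end

section
/- Let X, Y, Z be primitive 2D strings with height(X) ≤ height(Y) ≤ height(Z) and width(X) ≤ width(Y) ≤ width(Z). If X horizontally spans Y and Y horizontally spans Z, then X horizontally spans Z. -/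
/-- Fine–Wilf (weak version), assuming `p ≤ q` and length exactly `p + q`. -/
lemma fw_aux {α : Type*} : ∀ n p q (f : ℕ → α), p + q = n → 0 < p → p ≤ q →
    (∀ j, j + p < p + q → f j = f (j + p)) →
    (∀ j, j + q < p + q → f j = f (j + q)) →
    ∀ j, j + Nat.gcd p q < p + q → f j = f (j + Nat.gcd p q) := by
  intro n
  induction n using Nat.strong_induction_on with
  | _ n IH =>
    intro p q f hn hp hpq h1 h2 j hj
    rcases eq_or_lt_of_le hpq with heq | hlt
    · subst heq
      rw [Nat.gcd_self] at hj ⊢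
      exact h1 j hj
    · have hg : Nat.gcd p q = Nat.gcd p (q - p) := (Nat.gcd_sub_self_right hpq).symm
      have hq1 : ∀ j, j + p < p + (q - p) → f j = f (j + p) := by
        intro j h; exact h1 j (by omega)
      have hq2 : ∀ j, j + (q - p) < p + (q - p) → f j = f (j + (q - p)) := by
        intro j h
        have e1 : f j = f (j + q) := h2 j (by omega)
        have e2 : f (j + (q - p)) = f (j + (q - p) + p) := h1 _ (by omega)
        have e3 : j + (q - p) + p = j + q := by omega
        rw [e1, e2, e3]
      have key : ∀ a, a + Nat.gcd p q < q → f a = f (a + Nat.gcd p q) := by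
        intro a ha
        rcases le_total p (q - p) with hle | hle
        · have := IH q (by omega) p (q - p) f (by omega) hp hle hq1 hq2 a (by omega)
          rwa [← hg] at this
        · have hq' : 0 < q - p := by omega
          have := IH q (by omega) (q - p) p f (by omega) hq' hle
            (fun j h => hq2 j (by omega)) (fun j h => hq1 j (by omega)) a
            (by rw [Nat.gcd_comm, ← hg]; omega)
          rwa [Nat.gcd_comm, ← hg] at this
      set g := Nat.gcd p q with hgd
      have hgle : g ≤ q - p := Nat.le_of_dvd (by omega)
        (Nat.dvd_sub (Nat.gcd_dvd_right p q) (Nat.gcd_dvd_left p q))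
      rcases lt_or_ge (j + g) q with hcase | hcase
      · exact key j hcase
      · have hjp : p ≤ j := by omega
        have e1 : f (j - p) = f (j - p + p) := h1 _ (by omega)
        have e2 : f (j - p) = f (j - p + g) := key _ (by omega)
        have e3 : f (j - p + g) = f (j - p + g + p) := h1 _ (by omega)
        have e4 : j - p + p = j := by omega
        have e5 : j - p + g + p = j + g := by omega
        rw [e4] at e1
        rw [e5] at e3
        rw [← e1, e2, e3]

/-- Fine–Wilf (weak version). -/
lemma fw {α : Type*} (p q : ℕ) (f : ℕ → α) (hp : 0 < p) (hq : 0 < q)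
    (h1 : ∀ j, j + p < p + q → f j = f (j + p))
    (h2 : ∀ j, j + q < p + q → f j = f (j + q)) :
    ∀ j, j + Nat.gcd p q < p + q → f j = f (j + Nat.gcd p q) := by
  rcases le_total p q with h | h
  · exact fw_aux (p + q) p q f rfl hp h h1 h2
  · intro j hj
    have := fw_aux (q + p) q p f rfl hq h (fun j hh => h2 j (by omega))
      (fun j hh => h1 j (by omega)) j (by rw [Nat.gcd_comm]; omega)
    rwa [Nat.gcd_comm q p] at this

/-- If a primitive `S` horizontally spans `T`, then `width S ∣ width T`. -/
lemma hspans_wdvd {α : Type*} {h w H W : ℕ} {S : Fin h → Fin w → α} {T : Fin H → Fin W → α}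
    (hS : Primitive2D S) (hsp : HSpans S T) : w ∣ W := by
  obtain ⟨hh, hw, hH, hW, hhH, hwW, y, hy2, hyw, heq⟩ := hsp
  set g := Nat.gcd w W with hgdef
  have hg : 0 < g := Nat.gcd_pos_of_pos_left _ hw
  have hgw : g ∣ w := Nat.gcd_dvd_left _ _
  have hglew : g ≤ w := Nat.le_of_dvd hw hgw
  have hhH' : h < H := by omega
  have row : ∀ (i : Fin h) (a : ℕ) (ha : a < w),
      S i ⟨a, ha⟩ = S i ⟨a % g, lt_of_lt_of_le (Nat.mod_lt _ hg) hglew⟩ := by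
    intro i a ha
    set f : ℕ → α := fun j => S i ⟨j % w, Nat.mod_lt _ hw⟩ with hf
    have ifin : (⟨(i : ℕ) % h, Nat.mod_lt _ hh⟩ : Fin h) = i :=
      Fin.ext (Nat.mod_eq_of_lt i.isLt)
    have per_w : ∀ j, f j = f (j + w) := by
      intro j; simp only [hf, Nat.add_mod_right]
    have per_W : ∀ j, j + W < w + W → f j = f (j + W) := by
      intro j hj
      have hi3 : (i : ℕ) < 3 * h := by have := i.isLt; omega
      have E1 := heq i.1 j hi3 (by omega)
      have E2 := heq i.1 (j + W) hi3 (by omega)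
      rw [ifin] at E1 E2
      have eW : (⟨(j + W) % W, Nat.mod_lt _ hW⟩ : Fin W) = ⟨j % W, Nat.mod_lt _ hW⟩ :=
        Fin.ext (by simp [Nat.add_mod_right])
      rw [eW] at E2
      simp only [hf]
      rw [← E1, ← E2]
    have gper := fw w W f hw hW (fun j _ => per_w j) per_W
    have step : ∀ k a, a + g * k < w + W → f a = f (a + g * k) := by
      intro k
      induction k with
      | zero => intro a _; simp
      | succ n ih =>
        intro a hak
        have h1 : a + g * n < w + W := by nlinarith
        have h2 : f (a + g * n) = f (a + g * n + g) := gper _ (by nlinarith)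
        have h3 : a + g * n + g = a + g * (n + 1) := by ring
        rw [ih a h1, h2, h3]
    have keyf : f a = f (a % g) := by
      have := step (a / g) (a % g) (by rw [Nat.mod_add_div]; omega)
      rw [Nat.mod_add_div] at this
      exact this.symm
    simp only [hf] at keyf
    have ea : a % w = a := Nat.mod_eq_of_lt ha
    have eg : a % g % w = a % g := Nat.mod_eq_of_lt (lt_of_lt_of_le (Nat.mod_lt _ hg) hglew)
    simp only [ea, eg] at keyf
    exact keyf
  have tile : IsTileOf S h g := by
    refine ⟨hh, hg, dvd_refl h, hgw, ?_⟩
    intro i j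
    have ifin : (⟨(i : ℕ) % h, Nat.lt_of_le_of_lt (Nat.mod_le _ _) i.isLt⟩ : Fin h) = i :=
      Fin.ext (Nat.mod_eq_of_lt i.isLt)
    rw [ifin]
    have := row i j.1 j.isLt
    simpa using this
  have hgeq : g = w := (hS h g tile).2
  have := Nat.gcd_dvd_right w W
  rwa [← hgdef, hgeq] at this

/-- Transitivity of horizontal spanning: if `X` horizontally spans `Y` and `Y` horizontally
spans `Z`, then `X` horizontally spans `Z`. -/
theorem hspans_trans {α : Type*} {hx wx hy wy hz wz : ℕ}
    (X : Fin hx → Fin wx → α) (Y : Fin hy → Fin wy → α) (Z : Fin hz → Fin wz → α)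
    (hX : Primitive2D X) (hY : Primitive2D Y) (hZ : Primitive2D Z)
    (h1 : hx ≤ hy) (h2 : hy ≤ hz) (h3 : wx ≤ wy) (h4 : wy ≤ wz)
    (s1 : HSpans X Y) (s2 : HSpans Y Z) : HSpans X Z := by
  have d1 : wx ∣ wy := hspans_wdvd hX s1
  have d2 : wy ∣ wz := hspans_wdvd hY s2
  have d : wx ∣ wz := d1.trans d2
  obtain ⟨hhx, hwx, hhy, hwy, hxy, hwxy, y1, hy1, hy1w, e1⟩ := s1
  obtain ⟨hhy', hwy', hhz, hwz, hyz, hwyz, y2, hy2, hy2w, e2⟩ := s2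
  refine ⟨hhx, hwx, hhz, hwz, by omega, by omega, 2 * (wz / wx), ?_, ?_, ?_⟩
  · have : 0 < wz / wx := Nat.div_pos (by omega) hwx
    omega
  · rw [mul_assoc, Nat.div_mul_cancel d]
  · intro i j hi hj
    have E2 := e2 i j (by omega) hj
    have E1 := e1 i (j % wy) hi (by have := Nat.mod_lt j hwy; omega)
    have m1 : j % wy % wy = j % wy := Nat.mod_mod_of_dvd _ dvd_rfl
    have m2 : j % wy % wx = j % wx := Nat.mod_mod_of_dvd _ d1
    simp only [m1, m2] at E1
    exact E2.trans E1
end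

section
/- Every 2D string X has a unique primitive root: there is exactly one primitive 2D string Y such that X = Y^{a,b} for some positive integers a, b. -/
private lemma upr_shift_of_mod {β : Sort*} (g : ℕ → β) (p : ℕ)
    (h : ∀ i, g (i % p) = g i) : ∀ i, g (i + p) = g i := by
  intro i
  rw [← h (i + p), Nat.add_mod_right, h]

private lemma upr_shift_mul {β : Sort*} (g : ℕ → β) (p : ℕ)
    (h : ∀ i, g (i + p) = g i) : ∀ k i, g (i + k * p) = g i := by
  intro k
  induction k with
  | zero => simp
  | succ k ih =>
    intro i
    have e : i + (k + 1) * p = (i + k * p) + p := by ring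
    rw [e, h, ih]

private lemma upr_mod_of_shift {β : Sort*} (g : ℕ → β) (p : ℕ)
    (h : ∀ i, g (i + p) = g i) : ∀ i, g (i % p) = g i := by
  intro i
  conv_rhs => rw [← Nat.mod_add_div' i p]
  rw [upr_shift_mul g p h (i / p) (i % p)]

private lemma upr_gcd_shift {β : Sort*} (g : ℕ → β) :
    ∀ p q : ℕ, (∀ i, g (i + p) = g i) → (∀ i, g (i + q) = g i) →
      ∀ i, g (i + Nat.gcd p q) = g i := by
  intro p q
  induction p, q using Nat.gcd.induction with
  | H0 q => intro _ hq; simpa using hq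
  | H1 p q hp ih =>
    intro hpp hqq
    rw [Nat.gcd_rec]
    apply ih
    · intro i
      have e : i + q % p + q / p * p = i + q := by
        rw [add_assoc, Nat.mod_add_div']
      calc g (i + q % p) = g (i + q % p + q / p * p) :=
            (upr_shift_mul g p hpp _ _).symm
        _ = g (i + q) := by rw [e]
        _ = g i := hqq i
    · exact hpp

private lemma upr_gcd_mod {β : Sort*} (g : ℕ → β) (p q : ℕ)
    (hp : ∀ i, g (i % p) = g i) (hq : ∀ i, g (i % q) = g i) :
    ∀ i, g (i % Nat.gcd p q) = g i :=
  upr_mod_of_shift g _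
    (upr_gcd_shift g p q (upr_shift_of_mod g p hp) (upr_shift_of_mod g q hq))

/-- Every (non-empty) 2D string has a unique primitive root: there is exactly one pair of
dimensions `(h, w)` such that `X` is a tiling of its top-left `h × w` block and that block
is primitive. -/
theorem unique_primitive_root {α : Type*} {m n : ℕ} (hm : 0 < m) (hn : 0 < n)
    (X : Fin m → Fin n → α) :
    ∃! p : ℕ × ℕ, ∃ (hd : p.1 ∣ m) (wd : p.2 ∣ n),
      IsTileOf X p.1 p.2 ∧
      Primitive2D (fun (i : Fin p.1) (j : Fin p.2) =>
        X ⟨i.1, lt_of_lt_of_le i.isLt (Nat.le_of_dvd hm hd)⟩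
          ⟨j.1, lt_of_lt_of_le j.isLt (Nat.le_of_dvd hn wd)⟩) := by
  classical
  set f : ℕ → ℕ → α :=
    fun i j => X ⟨i % m, Nat.mod_lt _ hm⟩ ⟨j % n, Nat.mod_lt _ hn⟩ with hf
  have fX : ∀ (i j : ℕ) (hi : i < m) (hj : j < n), f i j = X ⟨i, hi⟩ ⟨j, hj⟩ := by
    intro i j hi hj
    simp only [hf]
    have e1 : (⟨i % m, Nat.mod_lt _ hm⟩ : Fin m) = ⟨i, hi⟩ :=
      Fin.ext (Nat.mod_eq_of_lt hi)
    have e2 : (⟨j % n, Nat.mod_lt _ hn⟩ : Fin n) = ⟨j, hj⟩ :=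
      Fin.ext (Nat.mod_eq_of_lt hj)
    rw [e1, e2]
  -- row periods
  set P : ℕ → Prop := fun h => 0 < h ∧ h ∣ m ∧ ∀ i j, f i j = f (i % h) j with hP
  set Q : ℕ → Prop := fun w => 0 < w ∧ w ∣ n ∧ ∀ i j, f i j = f i (j % w) with hQ
  have hPm : P m := by
    refine ⟨hm, dvd_rfl, fun i j => ?_⟩
    simp [hf, Nat.mod_mod_of_dvd]
  have hQn : Q n := by
    refine ⟨hn, dvd_rfl, fun i j => ?_⟩
    simp [hf, Nat.mod_mod_of_dvd]
  have hex : ∃ h, P h := ⟨m, hPm⟩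
  have hex' : ∃ w, Q w := ⟨n, hQn⟩
  set h0 := Nat.find hex with hh0
  set w0 := Nat.find hex' with hw0
  have hP0 : P h0 := Nat.find_spec hex
  have hQ0 : Q w0 := Nat.find_spec hex'
  have hminP : ∀ h, P h → h0 ∣ h := by
    intro h hPh
    have hg : P (Nat.gcd h0 h) := by
      refine ⟨Nat.gcd_pos_of_pos_left _ hP0.1,
        (Nat.gcd_dvd_left h0 h).trans hP0.2.1, fun i j => ?_⟩
      exact (upr_gcd_mod (fun i => f i j) h0 h
        (fun i => (hP0.2.2 i j).symm) (fun i => (hPh.2.2 i j).symm) i).symm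
    have h1 : h0 ≤ Nat.gcd h0 h := Nat.find_min' hex hg
    have h2 : Nat.gcd h0 h ≤ h0 := Nat.le_of_dvd hP0.1 (Nat.gcd_dvd_left _ _)
    have : Nat.gcd h0 h = h0 := le_antisymm h2 h1
    exact this ▸ Nat.gcd_dvd_right h0 h
  have hminQ : ∀ w, Q w → w0 ∣ w := by
    intro w hQw
    have hg : Q (Nat.gcd w0 w) := by
      refine ⟨Nat.gcd_pos_of_pos_left _ hQ0.1,
        (Nat.gcd_dvd_left w0 w).trans hQ0.2.1, fun i j => ?_⟩
      exact (upr_gcd_mod (fun j => f i j) w0 w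
        (fun j => (hQ0.2.2 i j).symm) (fun j => (hQw.2.2 i j).symm) j).symm
    have h1 : w0 ≤ Nat.gcd w0 w := Nat.find_min' hex' hg
    have h2 : Nat.gcd w0 w ≤ w0 := Nat.le_of_dvd hQ0.1 (Nat.gcd_dvd_left _ _)
    have : Nat.gcd w0 w = w0 := le_antisymm h2 h1
    exact this ▸ Nat.gcd_dvd_right w0 w
  -- tiling of X in terms of f
  have tile_to_f : ∀ h w : ℕ, IsTileOf X h w →
      0 < h ∧ 0 < w ∧ h ∣ m ∧ w ∣ n ∧ ∀ i j, f i j = f (i % h) (j % w) := by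
    rintro h w ⟨hh, hw, hdm, hdn, hA⟩
    refine ⟨hh, hw, hdm, hdn, fun i j => ?_⟩
    calc f i j = X ⟨i % m, Nat.mod_lt _ hm⟩ ⟨j % n, Nat.mod_lt _ hn⟩ := rfl
      _ = X ⟨i % m % h, Nat.lt_of_le_of_lt (Nat.mod_le _ _) (Nat.mod_lt _ hm)⟩
            ⟨j % n % w, Nat.lt_of_le_of_lt (Nat.mod_le _ _) (Nat.mod_lt _ hn)⟩ :=
          hA ⟨i % m, Nat.mod_lt _ hm⟩ ⟨j % n, Nat.mod_lt _ hn⟩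
      _ = f (i % m % h) (j % n % w) :=
          (fX _ _ (Nat.lt_of_le_of_lt (Nat.mod_le _ _) (Nat.mod_lt _ hm))
            (Nat.lt_of_le_of_lt (Nat.mod_le _ _) (Nat.mod_lt _ hn))).symm
      _ = f (i % h) (j % w) := by
          rw [Nat.mod_mod_of_dvd i hdm, Nat.mod_mod_of_dvd j hdn]
  have f_to_tile : ∀ h w : ℕ, 0 < h → 0 < w → h ∣ m → w ∣ n →
      (∀ i j, f i j = f (i % h) (j % w)) → IsTileOf X h w := by
    intro h w hh hw hdm hdn hper
    refine ⟨hh, hw, hdm, hdn, fun i j => ?_⟩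
    have := hper i.1 j.1
    rwa [fX i.1 j.1 i.isLt j.isLt,
      fX (i.1 % h) (j.1 % w)
        (lt_of_lt_of_le (Nat.mod_lt _ hh) (Nat.le_of_dvd hm hdm))
        (lt_of_lt_of_le (Nat.mod_lt _ hw) (Nat.le_of_dvd hn hdn)),
      Fin.eta, Fin.eta] at this
  -- combined P/Q gives tile condition and vice versa
  have PQ_per : ∀ h w : ℕ, P h → Q w → ∀ i j, f i j = f (i % h) (j % w) := by
    intro h w hPh hQw i j
    rw [hPh.2.2 i j, hQw.2.2 (i % h) j]
  have per_PQ : ∀ h w : ℕ, 0 < h → 0 < w → h ∣ m → w ∣ n →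
      (∀ i j, f i j = f (i % h) (j % w)) → P h ∧ Q w := by
    intro h w hh hw hdm hdn hper
    constructor
    · refine ⟨hh, hdm, fun i j => ?_⟩
      rw [hper i j, hper (i % h) j, Nat.mod_mod_of_dvd i (dvd_refl h)]
    · refine ⟨hw, hdn, fun i j => ?_⟩
      rw [hper i j, hper i (j % w), Nat.mod_mod_of_dvd j (dvd_refl w)]
  have hper0 : ∀ i j, f i j = f (i % h0) (j % w0) := PQ_per h0 w0 hP0 hQ0
  have hd0 : h0 ∣ m := hP0.2.1
  have wd0 : w0 ∣ n := hQ0.2.1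
  refine ⟨(h0, w0), ⟨hd0, wd0, f_to_tile h0 w0 hP0.1 hQ0.1 hd0 wd0 hper0, ?_⟩, ?_⟩
  · -- primitivity of the (h0, w0) block
    rintro h w ⟨hh, hw, hdh, hdw, hB⟩
    have hBf : ∀ (i j : ℕ) (hi : i < h0) (hj : j < w0),
        f i j = f (i % h) (j % w) := by
      intro i j hi hj
      have := hB ⟨i, hi⟩ ⟨j, hj⟩
      simp only at this
      rwa [← fX i j (lt_of_lt_of_le hi (Nat.le_of_dvd hm hd0))
            (lt_of_lt_of_le hj (Nat.le_of_dvd hn wd0)),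
        ← fX (i % h) (j % w)
            (lt_of_lt_of_le (lt_of_le_of_lt (Nat.mod_le _ _) hi) (Nat.le_of_dvd hm hd0))
            (lt_of_lt_of_le (lt_of_le_of_lt (Nat.mod_le _ _) hj) (Nat.le_of_dvd hn wd0))]
        at this
    have hper : ∀ i j, f i j = f (i % h) (j % w) := by
      intro i j
      calc f i j = f (i % h0) (j % w0) := hper0 i j
        _ = f (i % h0 % h) (j % w0 % w) :=
            hBf _ _ (Nat.mod_lt _ hP0.1) (Nat.mod_lt _ hQ0.1)
        _ = f (i % h) (j % w) := by
            rw [Nat.mod_mod_of_dvd i hdh, Nat.mod_mod_of_dvd j hdw]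
    obtain ⟨hPh, hQw⟩ := per_PQ h w hh hw (hdh.trans hd0) (hdw.trans wd0) hper
    exact ⟨Nat.dvd_antisymm hdh (hminP h hPh), Nat.dvd_antisymm hdw (hminQ w hQw)⟩
  · -- uniqueness
    rintro ⟨h, w⟩ ⟨hd, wd, htile, hprim⟩
    obtain ⟨hh, hw, hdm, hdn, hper⟩ := tile_to_f h w htile
    obtain ⟨hPh, hQw⟩ := per_PQ h w hh hw hdm hdn hper
    have hdvd1 : h0 ∣ h := hminP h hPh
    have hdvd2 : w0 ∣ w := hminQ w hQw
    -- the (h, w) block is a tile of its (h0, w0) block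
    have : IsTileOf (fun (i : Fin h) (j : Fin w) =>
        X ⟨i.1, lt_of_lt_of_le i.isLt (Nat.le_of_dvd hm hd)⟩
          ⟨j.1, lt_of_lt_of_le j.isLt (Nat.le_of_dvd hn wd)⟩) h0 w0 := by
      refine ⟨hP0.1, hQ0.1, hdvd1, hdvd2, fun i j => ?_⟩
      simp only
      rw [← fX i.1 j.1 (lt_of_lt_of_le i.isLt (Nat.le_of_dvd hm hd))
            (lt_of_lt_of_le j.isLt (Nat.le_of_dvd hn wd)),
        ← fX (i.1 % h0) (j.1 % w0)
            (lt_of_lt_of_le (lt_of_le_of_lt (Nat.mod_le _ _) i.isLt) (Nat.le_of_dvd hm hd))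
            (lt_of_lt_of_le (lt_of_le_of_lt (Nat.mod_le _ _) j.isLt) (Nat.le_of_dvd hn wd))]
      exact hper0 i.1 j.1
    obtain ⟨e1, e2⟩ := hprim h0 w0 this
    simp only [Prod.mk.injEq]
    exact ⟨e1.symm, e2.symm⟩
end

section
/- Let A be an n×n 2D string, and suppose a square of length ≥ 2^b occurs at position j of the metastring obtained from rows i..i+2^a−1 of A (viewing columns as metacharacters), with a ≥ 2 and b ≥ 2. Then no quartic with height in [2, 2^(a−1)) and width in [2, 2^(b−1)) has a bottom-right (extreme) occurrence at position (i,j) of A: any such quartic occurring at (i,j) also occurs at (i, j + half the square's length). -/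
/-- If a square `UU` with `|UU| = 2u ≥ 2^b` occurs at position `j` of the metastring of
rows `i..i+2^a-1` of `A`, then any quartic `W^{2,2}` with height in `[2, 2^(a-1))` and
width in `[2, 2^(b-1))` occurring at `(i,j)` also occurs at `(i, j+u)`; in particular no
such quartic has an extreme (bottom-right) occurrence at `(i,j)`. -/
theorem no_extreme_quartic_of_meta_square {α : Type*} {m n : ℕ}
    (A : Fin m → Fin n → α) (a b i j u : ℕ)
    (ha : 2 ≤ a) (hb : 2 ≤ b) (hu : 2 ^ b ≤ 2 * u)
    (hbm : i + 2 ^ a ≤ m) (hbn : j + 2 * u ≤ n)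
    (hsq : ∀ t r : ℕ, (ht : t < u) → (hr : r < 2 ^ a) →
      A ⟨i + r, by omega⟩ ⟨j + t, by omega⟩ = A ⟨i + r, by omega⟩ ⟨j + t + u, by omega⟩)
    {hq wq : ℕ} (W : Fin hq → Fin wq → α)
    (hH1 : 2 ≤ 2 * hq) (hH2 : 2 * hq < 2 ^ (a - 1))
    (hW1 : 2 ≤ 2 * wq) (hW2 : 2 * wq < 2 ^ (b - 1))
    (hocc : Occurs (tile W 2 2) A i j) :
    Occurs (tile W 2 2) A i (j + u) := by
  obtain ⟨h1, h2, hP⟩ := hocc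
  have hbu : 2 ^ (b - 1) ≤ u := by
    have : 2 ^ b = 2 * 2 ^ (b - 1) := by
      rw [← pow_succ']
      congr 1
      omega
    omega
  have hau : 2 ^ (a - 1) ≤ 2 ^ a := Nat.pow_le_pow_right (by norm_num) (by omega)
  have hwu : 2 * wq < u := by omega
  have hha : 2 * hq < 2 ^ a := by omega
  refine ⟨h1, by omega, ?_⟩
  intro p q
  have hq1 := p.isLt
  have hq2 := q.isLt
  have := hsq q.1 p.1 (by omega) (by omega)
  have h' := hP p q
  rw [← h']
  rw [this]
  congr 1
  exact Fin.mk_eq_mk.mpr (by omega)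
end

section
/- Fix a position (i,j) in an n×n 2D string A, and consider quartics occurring at (i,j) whose extreme (bottom-right) occurrences are at (i,j). For any d, suppose there are three quartics Q, Q', Q'' at (i,j) with aspect-ratio exponents equal (⌊log height⌋ − ⌊log width⌋ = d for all three), with ⌊log height(Q)⌋ < ⌊log height(Q')⌋ < ⌊log height(Q'')⌋. Then Q occurs entirely within the top-left quarter of Q'', and hence Q also occurs at position (i + height(Q'')/2, j + width(Q'')/2), contradicting extremality of Q's occurrence at (i,j). Consequently, at most two 'canonical sets' (dyadic height/width classes) per aspect-ratio value contain extreme quartic occurrences at (i,j). -/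
lemma log_gap_le {x y : ℕ} (hy : 0 < y)
    (h : Nat.log 2 (2 * x) + 2 ≤ Nat.log 2 (2 * y)) : 2 * x ≤ y := by
  have h1 : 2 * x < 2 ^ (Nat.log 2 (2 * x) + 1) :=
    Nat.lt_pow_succ_log_self one_lt_two _
  have h2 : 2 ^ Nat.log 2 (2 * y) ≤ 2 * y := Nat.pow_log_le_self 2 (by omega)
  have h3 : 2 ^ (Nat.log 2 (2 * x) + 2) ≤ 2 ^ Nat.log 2 (2 * y) :=
    Nat.pow_le_pow_right (by norm_num) h
  have h4 : 2 ^ (Nat.log 2 (2 * x) + 2) = 2 * 2 ^ (Nat.log 2 (2 * x) + 1) := by ring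
  omega

lemma fun2_congr {α : Type*} {m n : ℕ} (A : Fin m → Fin n → α)
    (x x' : Fin m) (y y' : Fin n) (hx : x.1 = x'.1) (hy : y.1 = y'.1) :
    A x y = A x' y' := by
  rw [Fin.ext hx, Fin.ext hy]

/-- If three quartics with the same aspect-ratio exponent and strictly increasing dyadic
height classes all occur at position `(i,j)` of `A`, then the smallest one also occurs at
`(i + height(Q'')/2, j + width(Q'')/2)`, where `Q''` is the largest one; hence the
occurrence of the smallest quartic at `(i,j)` is not extreme (bottom-right). -/
theorem aspect_ratio_three_quartics {α : Type*} {m n h1 w1 h2 w2 h3 w3 : ℕ} (d : ℤ)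
    (W1 : Fin h1 → Fin w1 → α) (W2 : Fin h2 → Fin w2 → α) (W3 : Fin h3 → Fin w3 → α)
    (A : Fin m → Fin n → α) (i j : ℕ)
    (hp1 : 0 < h1) (hq1 : 0 < w1) (hp2 : 0 < h2) (hq2 : 0 < w2) (hp3 : 0 < h3) (hq3 : 0 < w3)
    (hd1 : (Nat.log 2 (2 * h1) : ℤ) - (Nat.log 2 (2 * w1) : ℤ) = d)
    (hd2 : (Nat.log 2 (2 * h2) : ℤ) - (Nat.log 2 (2 * w2) : ℤ) = d)
    (hd3 : (Nat.log 2 (2 * h3) : ℤ) - (Nat.log 2 (2 * w3) : ℤ) = d)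
    (hinc1 : Nat.log 2 (2 * h1) < Nat.log 2 (2 * h2))
    (hinc2 : Nat.log 2 (2 * h2) < Nat.log 2 (2 * h3))
    (ho1 : Occurs (tile W1 2 2) A i j)
    (ho2 : Occurs (tile W2 2 2) A i j)
    (ho3 : Occurs (tile W3 2 2) A i j) :
    Occurs (tile W1 2 2) A (i + h3) (j + w3) ∧
    ∃ i' j' : ℕ, (i' ≠ i ∨ j' ≠ j) ∧ i ≤ i' ∧ j ≤ j' ∧ Occurs (tile W1 2 2) A i' j' := by
  have hh : 2 * h1 ≤ h3 := log_gap_le hp3 (by omega)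
  have hw : 2 * w1 ≤ w3 := log_gap_le hq3 (by omega)
  obtain ⟨hm1, hn1, e1⟩ := ho1
  obtain ⟨hm3, hn3, e3⟩ := ho3
  have key : Occurs (tile W1 2 2) A (i + h3) (j + w3) := by
    refine ⟨by omega, by omega, ?_⟩
    intro a b
    have ha := a.isLt
    have hb := b.isLt
    have E1 := e3 ⟨a.1, by omega⟩ ⟨b.1, by omega⟩
    have E2 := e3 ⟨h3 + a.1, by omega⟩ ⟨w3 + b.1, by omega⟩
    have emod : tile W3 2 2 ⟨h3 + a.1, by omega⟩ ⟨w3 + b.1, by omega⟩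
        = tile W3 2 2 ⟨a.1, by omega⟩ ⟨b.1, by omega⟩ := by
      unfold tile
      exact fun2_congr W3 _ _ _ _
        (by simp [Nat.add_mod_left]) (by simp [Nat.add_mod_left])
    calc A ⟨i + h3 + a.1, by omega⟩ ⟨j + w3 + b.1, by omega⟩
        = A ⟨i + (h3 + a.1), by omega⟩ ⟨j + (w3 + b.1), by omega⟩ :=
          fun2_congr A _ _ _ _ (by simp only [Fin.val_mk]; omega) (by simp only [Fin.val_mk]; omega)
      _ = tile W3 2 2 ⟨h3 + a.1, by omega⟩ ⟨w3 + b.1, by omega⟩ := E2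
      _ = tile W3 2 2 ⟨a.1, by omega⟩ ⟨b.1, by omega⟩ := emod
      _ = A ⟨i + a.1, by omega⟩ ⟨j + b.1, by omega⟩ := E1.symm
      _ = tile W1 2 2 a b := e1 a b
  exact ⟨key, i + h3, j + w3, Or.inl (by omega), by omega, by omega, key⟩
end
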